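/- arXiv:1205.1607 — 7 statements merged into one kernel-verified Lean document; each statement's English description precedes it below -/
import Mathlib

section
/- For the East model starting from the fully occupied configuration on (−∞,−1] with a frozen vacancy at the origin, the maximal distance ℓ(n) from the origin reachable by a vacancy under the constraint that at each time at most n vacancies are simultaneously present satisfies ℓ(n) = 2^n − 1 for all n ≥ 0. -/
/-- One legal East move on the interval `[-L,-1]` with a frozen vacancy at the origin `0`:
a configuration is encoded by the (finite) set `s` of its empty sites; the occupation at a
site `x ∈ [-L,-1]` may be flipped iff its East neighbour `x+1` is empty (the neighbour of
`-1` being the frozen vacancy at `0`); the resulting configuration must have at most `n`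
empty sites. -/
def EastStep (L : ℤ) (n : ℕ) (s s' : Finset ℤ) : Prop :=
  (∃ x : ℤ, -L ≤ x ∧ x ≤ -1 ∧ (x = -1 ∨ (x + 1) ∈ s) ∧
      ((x ∉ s ∧ s' = insert x s) ∨ (x ∈ s ∧ s' = s.erase x))) ∧ s'.card ≤ n

/-- `V(n)`: the set of configurations reachable from the fully occupied configuration
(no empty site) by legal East moves never exceeding `n` simultaneous empty sites. -/
def EastReach (L : ℤ) (n : ℕ) (s : Finset ℤ) : Prop :=
  Relation.ReflTransGen (EastStep L n) ∅ s

/-- `ℓ(n)`: the maximal distance from the origin of an empty site over all configurations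
in `V(n)` (with the convention `sup ∅ = 0`). -/
noncomputable def ellE (L : ℤ) (n : ℕ) : ℕ :=
  sSup {m : ℕ | ∃ s : Finset ℤ, EastReach L n s ∧ -(m : ℤ) ∈ s}


/-!
Moves are reversible, so `V(n)` is the connected component of the empty configuration. The East
constraint makes every block `[c, b)` next to the frozen vacancy `b` evolve autonomously, and the
sites below `c` evolve as an East model below the vacancy `c`, frozen or not. Take
`c = b - 2^(n-1)`. Every nonempty configuration of `V(n)` has a vacancy in `[c, b)`: otherwise,
on the way back to `∅` the block `[c, b)` holds at most `n - 1` vacancies as long as a vacancy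
survives below `c`, so by induction it never frees `c`, which the last vacancy below `c` needs in
order to disappear. Hence the sites below `c` form an East model with at most `n - 1` vacancies,
and induction bounds their distance from `c` by `2^(n-1) - 1`. The bound `2^n - 1` is attained by
a dyadic staircase of vacancies.
-/

open Finset Relation
open scoped symmDiff

def EastMove (a b : ℤ) (s s' : Finset ℤ) : Prop :=
  ∃ x, a ≤ x ∧ x < b ∧ (x + 1 = b ∨ x + 1 ∈ s) ∧ s' = s ∆ {x}

def BoundedEastMove (a b : ℤ) (n : ℕ) (s s' : Finset ℤ) : Prop :=
  EastMove a b s s' ∧ s'.card ≤ n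

lemma symmDiff_singleton_eq_ite {α : Type*} [DecidableEq α] (s : Finset α) (x : α) :
    s ∆ {x} = if x ∈ s then s.erase x else insert x s := by
  ext y
  split_ifs with hx <;> by_cases hy : y = x <;> simp_all [mem_symmDiff]

lemma eastStep_eq_boundedEastMove (L : ℤ) (n : ℕ) :
    EastStep L n = BoundedEastMove (-L) 0 n := by
  ext s s'
  have flip_iff (x : ℤ) : ((x ∉ s ∧ s' = insert x s) ∨ (x ∈ s ∧ s' = s.erase x)) ↔
      s' = s ∆ {x} := by
    rw [symmDiff_singleton_eq_ite]
    by_cases hx : x ∈ s <;> simp [hx]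
  simp only [EastStep, BoundedEastMove, EastMove, flip_iff]
  have hx (x : ℤ) : x = -1 ↔ x + 1 = 0 := by omega
  have hx' (x : ℤ) : x ≤ -1 ↔ x < 0 := by omega
  simp only [hx, hx']

section Reversibility

variable {a b : ℤ} {n : ℕ} {s s' t : Finset ℤ}

lemma EastMove.symm (h : EastMove a b s s') : EastMove a b s' s := by
  obtain ⟨x, hax, hxb, hsupp, rfl⟩ := h
  refine ⟨x, hax, hxb, ?_, by rw [symmDiff_symmDiff_cancel_right]⟩
  rcases hsupp with hsupp | hsupp
  · exact .inl hsupp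
  · exact .inr (mem_symmDiff.2 (.inl ⟨hsupp, by simp⟩))

lemma BoundedEastMove.symm (h : BoundedEastMove a b n s s') (hs : s.card ≤ n) :
    BoundedEastMove a b n s' s :=
  ⟨h.1.symm, hs⟩

lemma card_le_of_reflTransGen (h : ReflTransGen (BoundedEastMove a b n) s t)
    (hs : s.card ≤ n) : t.card ≤ n := by
  induction h with
  | refl => exact hs
  | tail _ hstep _ => exact hstep.2

lemma reflTransGen_boundedEastMove_symm (h : ReflTransGen (BoundedEastMove a b n) s t)
    (hs : s.card ≤ n) : ReflTransGen (BoundedEastMove a b n) t s := by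
  induction h with
  | refl => exact .refl
  | tail hsu hstep ih => exact .head (hstep.symm (card_le_of_reflTransGen hsu hs)) ih

end Reversibility

section Restriction

variable {a b c : ℤ} {n : ℕ} {s s' : Finset ℤ}

lemma filter_symmDiff_singleton {α : Type*} [DecidableEq α] (p : α → Prop) [DecidablePred p]
    (s : Finset α) (x : α) :
    (s ∆ {x}).filter p = if p x then s.filter p ∆ {x} else s.filter p := by
  ext y
  split_ifs with hx <;> by_cases hy : y = x <;> simp_all [mem_symmDiff]

lemma EastMove.reflTransGen_filter_le (h : EastMove a b s s')
    (hn : (s'.filter (c ≤ ·)).card ≤ n) :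
    ReflTransGen (BoundedEastMove a b n) (s.filter (c ≤ ·)) (s'.filter (c ≤ ·)) := by
  obtain ⟨x, hax, hxb, hsupp, rfl⟩ := h
  rw [filter_symmDiff_singleton] at hn ⊢
  split_ifs at hn ⊢ with hcx
  · refine .single ⟨⟨x, hax, hxb, ?_, rfl⟩, hn⟩
    exact hsupp.imp_right fun h => mem_filter.2 ⟨h, by omega⟩
  · exact .refl

lemma EastMove.reflTransGen_filter_lt (h : EastMove a b s s') (hcb : c ≤ b)
    (hn : (s'.filter (· < c)).card ≤ n) :
    ReflTransGen (BoundedEastMove a c n) (s.filter (· < c)) (s'.filter (· < c)) := by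
  obtain ⟨x, hax, hxb, hsupp, rfl⟩ := h
  rw [filter_symmDiff_singleton] at hn ⊢
  split_ifs at hn ⊢ with hxc
  · refine .single ⟨⟨x, hax, hxc, ?_, rfl⟩, hn⟩
    by_cases hc : x + 1 = c
    · exact .inl hc
    · exact .inr (mem_filter.2 ⟨hsupp.resolve_left (by omega), by omega⟩)
  · exact .refl

lemma EastMove.mem_of_filter_lt_eq_empty (h : EastMove a b s s') (hcb : c < b)
    (hs : (s.filter (· < c)).Nonempty) (hs' : s'.filter (· < c) = ∅) : c ∈ s := by
  obtain ⟨x, -, hxb, hsupp, rfl⟩ := h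
  rw [filter_symmDiff_singleton] at hs'
  split_ifs at hs' with hxc
  · rw [symmDiff_eq_empty] at hs'
    have hx1 : x + 1 ∈ s := hsupp.resolve_left (by omega)
    by_contra hc
    have hx1c : x + 1 < c := lt_of_le_of_ne hxc (by rintro rfl; exact hc hx1)
    have : x + 1 ∈ s.filter (· < c) := mem_filter.2 ⟨hx1, hx1c⟩
    simp [hs'] at this
  · simp [hs'] at hs

end Restriction

section UpperBound

variable {a b : ℤ} {n : ℕ} {s : Finset ℤ}

lemma exists_mem_sub_two_pow_le_of_reflTransGen
    (hfar : ∀ t, ReflTransGen (BoundedEastMove a b n) ∅ t → ∀ x ∈ t, b - 2 ^ n < x)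
    (hs : ReflTransGen (BoundedEastMove a b (n + 1)) ∅ s) (hne : s.Nonempty) :
    ∃ x ∈ s, b - 2 ^ n ≤ x := by
  set c := b - 2 ^ n
  have hcb : c < b := by have := pow_pos (two_pos (α := ℤ)) n; omega
  by_contra! hdeep
  have key : ∀ u, ReflTransGen (BoundedEastMove a b (n + 1)) s u →
      (u.filter (· < c)).Nonempty ∧ ReflTransGen (BoundedEastMove a b n) ∅ (u.filter (c ≤ ·)) := by
    intro u hu
    induction hu with
    | refl =>
      rw [filter_true_of_mem hdeep, filter_false_of_mem fun x hx => not_le.2 (hdeep x hx)]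
      exact ⟨hne, .refl⟩
    | @tail u u' _ hstep ih =>
      obtain ⟨hne, hreach⟩ := ih
      obtain ⟨y, hy⟩ : (u'.filter (· < c)).Nonempty := by
        rw [nonempty_iff_ne_empty]
        intro hempty
        have hc := hstep.1.mem_of_filter_lt_eq_empty hcb hne hempty
        exact lt_irrefl c (hfar _ hreach c (mem_filter.2 ⟨hc, le_rfl⟩))
      refine ⟨⟨y, hy⟩, hreach.trans (hstep.1.reflTransGen_filter_le ?_)⟩
      have := card_lt_card <| (filter_ssubset (p := (c ≤ ·))).2
        ⟨y, (mem_filter.1 hy).1, not_le.2 (mem_filter.1 hy).2⟩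
      have := hstep.2
      omega
  simpa using (key ∅ (reflTransGen_boundedEastMove_symm hs (by simp))).1

lemma sub_two_pow_lt_of_reflTransGen : ∀ {n : ℕ} {b : ℤ} {s : Finset ℤ},
    ReflTransGen (BoundedEastMove a b n) ∅ s → ∀ x ∈ s, b - 2 ^ n < x
  | 0, b, s, hs => by
    have : s = ∅ := card_eq_zero.1 (Nat.le_zero.1 (card_le_of_reflTransGen hs (by simp)))
    simp [this]
  | n + 1, b, s, hs => by
    set c := b - 2 ^ n
    have hpow : (0 : ℤ) < 2 ^ n := pow_pos two_pos n
    have key : ∀ t, ReflTransGen (BoundedEastMove a b (n + 1)) ∅ t →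
        ReflTransGen (BoundedEastMove a c n) ∅ (t.filter (· < c)) := by
      intro t ht
      induction ht with
      | refl => simpa using ReflTransGen.refl
      | @tail t t' ht hstep ih =>
        refine ih.trans (hstep.1.reflTransGen_filter_lt (by omega) ?_)
        rcases t'.eq_empty_or_nonempty with rfl | hne
        · simp
        · obtain ⟨y, hy, hcy⟩ := exists_mem_sub_two_pow_le_of_reflTransGen
            (fun _ => sub_two_pow_lt_of_reflTransGen) (ht.tail hstep) hne
          have := card_lt_card <| (filter_ssubset (p := (· < c))).2 ⟨y, hy, not_lt.2 hcy⟩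
          have := hstep.2
          omega
    intro x hx
    by_cases hxc : x < c
    · have := sub_two_pow_lt_of_reflTransGen (key s hs) x (mem_filter.2 ⟨hx, hxc⟩)
      rw [pow_succ]
      linarith
    · rw [pow_succ]
      linarith

end UpperBound

lemma EastMove.insert {a b x : ℤ} {s : Finset ℤ} (hax : a ≤ x) (hxb : x < b)
    (hsupp : x + 1 = b ∨ x + 1 ∈ s) (hx : x ∉ s) : EastMove a b s (insert x s) :=
  ⟨x, hax, hxb, hsupp, by rw [symmDiff_singleton_eq_ite, if_neg hx]⟩

/-- The vacancies `b - 2^(n-1), b - 2^(n-1) - 2^(n-2), …, b - 2^n + 1`. -/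
def staircase : ℕ → ℤ → Finset ℤ
  | 0, _ => ∅
  | n + 1, b => insert (b - 2 ^ n) (staircase n (b - 2 ^ n))

section Staircase

variable {a B : ℤ} {N : ℕ}

lemma mem_staircase : ∀ {n : ℕ} {b x : ℤ}, x ∈ staircase n b → b - 2 ^ n < x ∧ x < b
  | 0, _, _, h => by simp [staircase] at h
  | n + 1, b, x, h => by
    have hpow : (0 : ℤ) < 2 ^ n := pow_pos two_pos n
    rw [staircase, mem_insert] at h
    rcases h with rfl | h
    · constructor <;> linarith [pow_succ (2 : ℤ) n]
    · have := mem_staircase h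
      constructor <;> linarith [pow_succ (2 : ℤ) n]

lemma card_staircase_le : ∀ (n : ℕ) (b : ℤ), (staircase n b).card ≤ n
  | 0, _ => by simp [staircase]
  | n + 1, b => (card_insert_le _ _).trans (by simpa using card_staircase_le n (b - 2 ^ n))

lemma sub_two_pow_add_one_mem_staircase : ∀ {n : ℕ} (b : ℤ), 0 < n →
    b - 2 ^ n + 1 ∈ staircase n b
  | 1, b, _ => mem_insert.2 (.inl (by ring))
  | n + 2, b, _ => by
    have := sub_two_pow_add_one_mem_staircase (b - 2 ^ (n + 1)) n.succ_pos
    rw [staircase, mem_insert]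
    right
    convert this using 1
    rw [Nat.succ_eq_add_one, pow_succ 2 (n + 1)]
    ring

/-- To build the staircase of height `n + 1` at `b`: build the one of height `n` at `b`, use its
deepest vacancy to empty `b - 2^n`, undo it, and build the one of height `n` at `b - 2^n`. -/
lemma reflTransGen_union_staircase : ∀ (n : ℕ) {C : Finset ℤ} {b : ℤ}, b ≤ B →
    (b = B ∨ b ∈ C) → a ≤ b - 2 ^ n + 1 → (∀ y ∈ C, y ≤ b - 2 ^ n ∨ b ≤ y) →
    C.card + n ≤ N → ReflTransGen (BoundedEastMove a B N) C (C ∪ staircase n b)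
  | 0, C, b, _, _, _, _, _ => by simpa [staircase] using .refl
  | n + 1, C, b, hbB, hsupp, ha, hfree, hcard => by
    set q := b - 2 ^ n
    have hpow : (0 : ℤ) < 2 ^ n := pow_pos two_pos n
    have hpow' : (2 : ℤ) ^ (n + 1) = 2 ^ n + 2 ^ n := by ring
    have hqC : q ∉ C := fun hq => by rcases hfree q hq with h | h <;> linarith
    have hqS : q ∉ staircase n b := fun hq => by linarith [(mem_staircase hq).1]
    have build_at_b : ReflTransGen (BoundedEastMove a B N) C (C ∪ staircase n b) :=
      reflTransGen_union_staircase n hbB hsupp (by linarith)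
        (fun y hy => (hfree y hy).imp_left fun h => by linarith) (by omega)
    have empty_q : BoundedEastMove a B N (C ∪ staircase n b) (insert q C ∪ staircase n b) := by
      rw [insert_union]
      refine ⟨.insert (by linarith) (by linarith) ?_ (by simp [hqC, hqS]), ?_⟩
      · rcases n.eq_zero_or_pos with rfl | hn
        · simpa [q] using hsupp.imp_right (mem_union_left _)
        · exact .inr (mem_union_right _ (sub_two_pow_add_one_mem_staircase b hn))
      · have := card_insert_le q (C ∪ staircase n b)
        have := card_union_le C (staircase n b)
        have := card_staircase_le n b
        omega
    have hqC_card : (insert q C).card + n ≤ N := by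
      have := card_insert_le q C
      omega
    have unbuild_at_b : ReflTransGen (BoundedEastMove a B N) (insert q C ∪ staircase n b)
        (insert q C) := by
      refine reflTransGen_boundedEastMove_symm (reflTransGen_union_staircase n hbB
        (hsupp.imp_right (mem_insert_of_mem ·)) (by linarith) ?_ hqC_card) (by omega)
      intro y hy
      rcases mem_insert.1 hy with rfl | hy
      · left; rfl
      · exact (hfree y hy).imp_left fun h => by linarith
    have build_at_q : ReflTransGen (BoundedEastMove a B N) (insert q C)
        (insert q C ∪ staircase n q) := by
      refine reflTransGen_union_staircase n (by linarith) (.inr (mem_insert_self q C))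
        (by linarith) ?_ hqC_card
      intro y hy
      rcases mem_insert.1 hy with rfl | hy
      · right; rfl
      · exact (hfree y hy).imp (fun h => by linarith) fun h => by linarith
    rw [staircase, union_insert, ← insert_union]
    exact build_at_b.trans (.head empty_q (unbuild_at_b.trans build_at_q))

end Staircase

/-- For the East model started from the fully occupied configuration on `(-∞,-1]`
(here on `[-L,-1]` with `L ≥ 2^n - 1`) with a frozen vacancy at the origin, the maximal
distance reachable by a vacancy using at most `n` simultaneous vacancies is
`ℓ(n) = 2^n - 1`. -/
theorem east_ell_eq (n : ℕ) (L : ℤ) (hL : (2 : ℤ) ^ n - 1 ≤ L) :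
    ellE L n = 2 ^ n - 1 := by
  have hreach (s : Finset ℤ) :
      EastReach L n s ↔ ReflTransGen (BoundedEastMove (-L) 0 n) ∅ s := by
    rw [EastReach, eastStep_eq_boundedEastMove]
  have hub : 2 ^ n - 1 ∈ upperBounds {m : ℕ | ∃ s, EastReach L n s ∧ -(m : ℤ) ∈ s} := by
    rintro m ⟨s, hs, hm⟩
    have := sub_two_pow_lt_of_reflTransGen ((hreach s).1 hs) _ hm
    have : m < 2 ^ n := by exact_mod_cast (by linarith : (m : ℤ) < 2 ^ n)
    omega
  refine le_antisymm (csSup_le' hub) ?_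
  rcases n.eq_zero_or_pos with rfl | hn
  · simp
  refine le_csSup ⟨_, hub⟩ ⟨staircase n 0, (hreach _).2 ?_, ?_⟩
  · simpa using reflTransGen_union_staircase n (C := ∅) le_rfl (.inl rfl) (by linarith)
      (by simp) (by simp)
  · convert sub_two_pow_add_one_mem_staircase 0 hn using 1
    push_cast [Nat.one_le_two_pow]
    ring
end

section
/- Consider the two-block constrained dynamics on Ω_Λ = {0,1}^Λ with generator L_block f = c₁(π₂ f − f) + (π₁ f − f), where c₁(σ) ∈ {0,1} is the indicator that σ has at least one zero in the overlap strip I ⊆ B₂, π₁ f = π_{B₂}(f), π₂ f = π_{B₁}(f) are conditional expectation projections with π₁π₂ = π₂π₁ = π (the full mean). Then every eigenvalue λ of L_block with λ ∈ (−1, 0) satisfies λ = −1 + √(1 − π_{B₂}(c₁)). Consequently the spectral gap of the block dynamics is at least 1 − √ε where ε = π_{B₂}(c₁ = 0). -/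
/-!
Averaging the eigenvalue equation over the first block gives `(1 + λ) π₂ f = π f`, and averaging
once more gives `λ π f = 0`; so for `λ ∉ {0, -1}` we get `π₂ f = 0`. The equation then reduces to
`(1 + λ + c₁) f = π₁ f`. Since `c₁² = c₁`, multiplying by `2 + λ - c₁` removes the dependence of
the coefficient on `σ₂`: `(1 + λ)(2 + λ) f = (2 + λ - c₁) π₁ f`, and averaging over the second
block yields `(1 + λ)(2 + λ) = 2 + λ - π_{B₂}(c₁)`, i.e. `(1 + λ)² = 1 - π_{B₂}(c₁)`.
-/

open Finset

namespace BlockDynamics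

variable {Ω₁ Ω₂ : Type*} [Fintype Ω₁] [Fintype Ω₂] {μ₁ : Ω₁ → ℝ} {μ₂ : Ω₂ → ℝ}
  {c : Ω₂ → ℝ} {f : Ω₁ × Ω₂ → ℝ} {lam : ℝ}

/-- The paper's `π₂`, seen as a function of the `B₂`-coordinate. -/
def avgFst (μ₁ : Ω₁ → ℝ) (f : Ω₁ × Ω₂ → ℝ) (y : Ω₂) : ℝ := ∑ x, μ₁ x * f (x, y)

/-- The paper's `π₁`, seen as a function of the `B₁`-coordinate. -/
def avgSnd (μ₂ : Ω₂ → ℝ) (f : Ω₁ × Ω₂ → ℝ) (x : Ω₁) : ℝ := ∑ y, μ₂ y * f (x, y)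

def blockGenerator (μ₁ : Ω₁ → ℝ) (μ₂ : Ω₂ → ℝ) (c : Ω₂ → ℝ) (f : Ω₁ × Ω₂ → ℝ)
    (σ : Ω₁ × Ω₂) : ℝ :=
  c σ.2 * (avgFst μ₁ f σ.2 - f σ) + (avgSnd μ₂ f σ.1 - f σ)

theorem sum_mul_avgSnd (μ₁ : Ω₁ → ℝ) (μ₂ : Ω₂ → ℝ) (f : Ω₁ × Ω₂ → ℝ) :
    ∑ x, μ₁ x * avgSnd μ₂ f x = ∑ y, μ₂ y * avgFst μ₁ f y := by
  simp only [avgSnd, avgFst, mul_sum]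
  rw [sum_comm]
  simp only [mul_left_comm]

theorem one_add_mul_avgFst_of_eigen (hμ₁ : ∑ x, μ₁ x = 1)
    (heig : ∀ σ, blockGenerator μ₁ μ₂ c f σ = lam * f σ) (y : Ω₂) :
    (1 + lam) * avgFst μ₁ f y = ∑ x, μ₁ x * avgSnd μ₂ f x := by
  have haverage : ∑ x, μ₁ x * blockGenerator μ₁ μ₂ c f (x, y) = lam * avgFst μ₁ f y := by
    simp only [heig, avgFst, mul_sum, mul_left_comm]
  simp only [blockGenerator, avgFst, mul_add, mul_sub, sum_add_distrib, sum_sub_distrib,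
    ← sum_mul, hμ₁, mul_left_comm (μ₁ _) (c y), ← mul_sum] at haverage
  rw [avgFst]
  linarith

theorem avgFst_eq_zero_of_eigen (hμ₁ : ∑ x, μ₁ x = 1) (hμ₂ : ∑ y, μ₂ y = 1)
    (heig : ∀ σ, blockGenerator μ₁ μ₂ c f σ = lam * f σ) (h0 : lam ≠ 0) (h1 : lam ≠ -1) :
    avgFst μ₁ f = 0 := by
  have hmarg := one_add_mul_avgFst_of_eigen hμ₁ heig
  have hmean : lam * ∑ y, μ₂ y * avgFst μ₁ f y = 0 := by
    have hfixed : (1 + lam) * ∑ y, μ₂ y * avgFst μ₁ f y = ∑ y, μ₂ y * avgFst μ₁ f y :=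
      calc (1 + lam) * ∑ y, μ₂ y * avgFst μ₁ f y
          = ∑ y, μ₂ y * ((1 + lam) * avgFst μ₁ f y) := by
            simp only [mul_sum, mul_left_comm (1 + lam)]
        _ = ∑ y, μ₂ y * avgFst μ₁ f y := by
            simp only [hmarg, ← sum_mul, hμ₂, one_mul, sum_mul_avgSnd]
    linarith
  funext y
  have hy := hmarg y
  rw [sum_mul_avgSnd, (mul_eq_zero.mp hmean).resolve_left h0] at hy
  exact (mul_eq_zero.mp hy).resolve_left fun h => h1 (by linarith)

theorem mul_eq_avgSnd_of_eigen (heig : ∀ σ, blockGenerator μ₁ μ₂ c f σ = lam * f σ)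
    (hfst : avgFst μ₁ f = 0) (σ : Ω₁ × Ω₂) :
    (lam + 1 + c σ.2) * f σ = avgSnd μ₂ f σ.1 := by
  have h := heig σ
  rw [blockGenerator, hfst, Pi.zero_apply] at h
  linarith

theorem sq_add_one_eq_of_mul_eq (hμ : ∑ y, μ₂ y = 1) (hc : ∀ y, c y = 0 ∨ c y = 1)
    {u : Ω₂ → ℝ} {a : ℝ} (hu : ∀ y, (lam + 1 + c y) * u y = a)
    (hsum : ∑ y, μ₂ y * u y = a) (ha : a ≠ 0) :
    (lam + 1) ^ 2 = 1 - ∑ y, μ₂ y * c y := by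
  have hcleared :
      ∀ y, (lam + 1) * (lam + 2) * (μ₂ y * u y) = a * ((lam + 2) * μ₂ y - μ₂ y * c y) := by
    intro y
    rw [← hu y]
    rcases hc y with h | h <;> rw [h] <;> ring
  have hquad : a * ((lam + 1) * (lam + 2)) = a * (lam + 2 - ∑ y, μ₂ y * c y) :=
    calc a * ((lam + 1) * (lam + 2)) = (lam + 1) * (lam + 2) * ∑ y, μ₂ y * u y := by
          rw [hsum, mul_comm]
      _ = a * (lam + 2 - ∑ y, μ₂ y * c y) := by
          simp only [mul_sum, hcleared]
          rw [← mul_sum, sum_sub_distrib, ← mul_sum, hμ, mul_one]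
  linear_combination mul_left_cancel₀ ha hquad

theorem sq_add_one_eq_of_eigen (hμ₁ : ∑ x, μ₁ x = 1) (hμ₂ : ∑ y, μ₂ y = 1)
    (hc : ∀ y, c y = 0 ∨ c y = 1) (hf : f ≠ 0)
    (heig : ∀ σ, blockGenerator μ₁ μ₂ c f σ = lam * f σ)
    (h0 : lam ≠ 0) (h1 : lam ≠ -1) (h2 : lam ≠ -2) :
    (lam + 1) ^ 2 = 1 - ∑ y, μ₂ y * c y := by
  have hrel := mul_eq_avgSnd_of_eigen heig (avgFst_eq_zero_of_eigen hμ₁ hμ₂ heig h0 h1)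
  obtain ⟨σ, hσ⟩ := Function.ne_iff.mp hf
  have hcoeff : lam + 1 + c σ.2 ≠ 0 := by
    rcases hc σ.2 with h | h <;> rw [h]
    · exact fun h' => h1 (by linarith)
    · exact fun h' => h2 (by linarith)
  have hmean_ne : avgSnd μ₂ f σ.1 ≠ 0 := hrel σ ▸ mul_ne_zero hcoeff hσ
  exact sq_add_one_eq_of_mul_eq hμ₂ hc (fun y => hrel (σ.1, y)) rfl hmean_ne

end BlockDynamics

open BlockDynamics in
theorem block_dynamics_eigenvalues_general {Ω₁ Ω₂ : Type*} [Fintype Ω₁] [Fintype Ω₂]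
    (μ₁ : Ω₁ → ℝ) (μ₂ : Ω₂ → ℝ)
    (hμ₁ : ∑ x, μ₁ x = 1) (hμ₂ : ∑ y, μ₂ y = 1)
    (c₁ : Ω₂ → ℝ) (hc : ∀ y, c₁ y = 0 ∨ c₁ y = 1)
    (f : Ω₁ × Ω₂ → ℝ) (hf : f ≠ 0) (lam : ℝ)
    (heig : ∀ σ : Ω₁ × Ω₂,
      c₁ σ.2 * ((∑ x, μ₁ x * f (x, σ.2)) - f σ) + ((∑ y, μ₂ y * f (σ.1, y)) - f σ)
        = lam * f σ) :
    ((-1 < lam ∧ lam < 0) → lam = -1 + Real.sqrt (1 - ∑ y, μ₂ y * c₁ y)) ∧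
    (lam ≠ 0 → lam ≤ -(1 - Real.sqrt (1 - ∑ y, μ₂ y * c₁ y))) := by
  have hquad : lam ≠ 0 → lam ≠ -1 → lam ≠ -2 → (lam + 1) ^ 2 = 1 - ∑ y, μ₂ y * c₁ y :=
    sq_add_one_eq_of_eigen hμ₁ hμ₂ hc hf heig
  refine ⟨fun ⟨hlo, hhi⟩ => ?_, fun h0 => ?_⟩
  · rw [← hquad hhi.ne (by linarith) (by linarith), Real.sqrt_sq (by linarith)]
    ring
  · by_cases hsmall : lam = -1 ∨ lam = -2
    · have := Real.sqrt_nonneg (1 - ∑ y, μ₂ y * c₁ y)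
      rcases hsmall with rfl | rfl <;> linarith
    · push Not at hsmall
      rw [← hquad h0 hsmall.1 hsmall.2, Real.sqrt_sq_eq_abs]
      linarith [le_abs_self (lam + 1)]

/-- **Spectral analysis of the two-block constrained dynamics.**  On `Ω_Λ = Ω₁ × Ω₂`
(configurations on the blocks `B₁` and `B₂`) with product probability weights `μ₁ ⊗ μ₂`,
consider the generator `L_block f = c₁ (π₂ f - f) + (π₁ f - f)`, where
`π₁ f (σ) = Σ_y μ₂(y) f(σ₁, y)` averages over `B₂`, `π₂ f (σ) = Σ_x μ₁(x) f(x, σ₂)`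
averages over `B₁`, and `c₁ ∈ {0,1}` (the indicator of a zero in the overlap strip
`I ⊆ B₂`) depends only on the `B₂`-coordinate.  Then every eigenvalue `λ ∈ (-1,0)`
equals `-1 + √(1 - π_{B₂}(c₁))`, and every nonzero eigenvalue `λ` satisfies
`λ ≤ -(1 - √ε)` where `ε = π_{B₂}(c₁ = 0) = 1 - π_{B₂}(c₁)`; i.e. the spectral gap of the
block dynamics is at least `1 - √ε`. -/
theorem block_dynamics_eigenvalues {Ω₁ Ω₂ : Type*} [Fintype Ω₁] [Fintype Ω₂]
    (μ₁ : Ω₁ → ℝ) (μ₂ : Ω₂ → ℝ)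
    (hμ₁pos : ∀ x, 0 < μ₁ x) (hμ₂pos : ∀ y, 0 < μ₂ y)
    (hμ₁ : ∑ x, μ₁ x = 1) (hμ₂ : ∑ y, μ₂ y = 1)
    (c₁ : Ω₂ → ℝ) (hc : ∀ y, c₁ y = 0 ∨ c₁ y = 1)
    (f : Ω₁ × Ω₂ → ℝ) (hf : f ≠ 0) (lam : ℝ)
    (heig : ∀ σ : Ω₁ × Ω₂,
      c₁ σ.2 * ((∑ x, μ₁ x * f (x, σ.2)) - f σ) + ((∑ y, μ₂ y * f (σ.1, y)) - f σ)
        = lam * f σ) :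
    ((-1 < lam ∧ lam < 0) → lam = -1 + Real.sqrt (1 - ∑ y, μ₂ y * c₁ y)) ∧
    (lam ≠ 0 → lam ≤ -(1 - Real.sqrt (1 - ∑ y, μ₂ y * c₁ y))) :=
  block_dynamics_eigenvalues_general μ₁ μ₂ hμ₁ hμ₂ c₁ hc f hf lam heig
end

section
/- For p ∈ (0,1), the supremum over α ∈ [0,1] of (1+p)α² − 1 + 2α√((1−α²)p(1−p)) is at most p·(1−p)/(1+p) + p, which is strictly less than 1. -/
/-!
Bound `α` by `1` in front of the square root, then split `(1 - α²) p (1 - p)` as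
`(p (1 - p) / (1 + p)) · ((1 + p)(1 - α²))` and apply AM-GM: the `α²` terms cancel and
leave `p (1 - p) / (1 + p) + p = 2p / (1 + p) < 1`.
-/

open Real

lemma two_mul_sqrt_mul_le_div_add_mul {c t s : ℝ} (hc : 0 ≤ c) (ht : 0 ≤ t) (hs : 0 < s) :
    2 * √(c * t) ≤ c / s + s * t := by
  have hsplit : c * t = c / s * (s * t) := by field_simp
  rw [hsplit, sqrt_mul (by positivity)]
  calc 2 * (√(c / s) * √(s * t)) ≤ √(c / s) ^ 2 + √(s * t) ^ 2 := by
        rw [← mul_assoc]; exact two_mul_le_add_sq _ _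
    _ = c / s + s * t := by rw [sq_sqrt (by positivity), sq_sqrt (by positivity)]

lemma mul_one_sub_div_one_add_add_lt_one {p : ℝ} (hp : 0 < p) (hp1 : p < 1) :
    p * (1 - p) / (1 + p) + p < 1 := by
  rw [div_add' _ _ _ (by positivity), div_lt_one (by positivity)]
  nlinarith

/-- For `p ∈ (0,1)`, the supremum over `α ∈ [0,1]` of
`(1+p)α² - 1 + 2α√((1-α²)p(1-p))` is at most `p(1-p)/(1+p) + p`, which is
strictly less than `1`. -/
theorem persistence_sup_bound (p : ℝ) (hp : 0 < p) (hp1 : p < 1) :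
    (∀ α : ℝ, 0 ≤ α → α ≤ 1 →
      (1 + p) * α ^ 2 - 1 + 2 * α * Real.sqrt ((1 - α ^ 2) * p * (1 - p))
        ≤ p * (1 - p) / (1 + p) + p) ∧
    p * (1 - p) / (1 + p) + p < 1 := by
  refine ⟨fun α hα0 hα1 => ?_, mul_one_sub_div_one_add_add_lt_one hp hp1⟩
  have hα2 : 0 ≤ 1 - α ^ 2 := by nlinarith
  have hpq : 0 ≤ p * (1 - p) := mul_nonneg hp.le (by linarith)
  calc (1 + p) * α ^ 2 - 1 + 2 * α * √((1 - α ^ 2) * p * (1 - p))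
      ≤ (1 + p) * α ^ 2 - 1 + 2 * √(p * (1 - p) * (1 - α ^ 2)) := by
        rw [show (1 - α ^ 2) * p * (1 - p) = p * (1 - p) * (1 - α ^ 2) by ring]
        gcongr
        linarith
    _ ≤ (1 + p) * α ^ 2 - 1 + (p * (1 - p) / (1 + p) + (1 + p) * (1 - α ^ 2)) := by
        gcongr
        exact two_mul_sqrt_mul_le_div_add_mul hpq hα2 (by linarith)
    _ = p * (1 - p) / (1 + p) + p := by ring
end

section
/- Let L be a self-adjoint Markov generator on L²(π) with spectral gap γ > 0, and let V be multiplication by a function with 0 ≤ V ≤ 1. For λ > 0, the supremum β_λ of the spectrum of H_λ = L + λV satisfies β_λ/λ ≤ sup_{0≤α≤1} { (1 − γ/λ)(1−α²) + π(V)α² + 2α√((1−α²)·π(V)·(1−π(V))) }. -/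
/-!
Write `f = a + g` with `a = π(f)` and `π(g) = 0`, so `π(g²) = 1 - a²`. Since `L 1 = 0` and `L` is
symmetric, `⟨f, L f⟩ = ⟨g, L g⟩ ≤ -γ (1 - a²)`. The potential term splits as
`⟨f, V f⟩ = a² π(V) + 2a ⟨V, g⟩ + ⟨g, V g⟩` with `⟨g, V g⟩ ≤ π(g²)`; as `g` is centred,
`⟨V, g⟩ = ⟨V - π(V), g⟩`, and Cauchy–Schwarz with `Var(V) ≤ π(V)(1 - π(V))` (true for
`0 ≤ V ≤ 1`) bounds the cross term by `√((1 - a²) π(V) (1 - π(V)))`. Take `α = |a|`.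
-/

open Finset

section WeightedSums

variable {Ω : Type*} [Fintype Ω] {π : Ω → ℝ}

theorem sum_weighted_mul_sq_le_sq_mul_sq (hπ : ∀ x, 0 ≤ π x) (u v : Ω → ℝ) :
    (∑ x, π x * u x * v x) ^ 2 ≤ (∑ x, π x * u x ^ 2) * ∑ x, π x * v x ^ 2 :=
  sum_sq_le_sum_mul_sum_of_sq_le_mul _ (fun x _ => mul_nonneg (hπ x) (sq_nonneg _))
    (fun x _ => mul_nonneg (hπ x) (sq_nonneg _)) (fun x _ => (by ring : _ = _).le)

theorem sum_weighted_sub_const (hπ1 : ∑ x, π x = 1) (u : Ω → ℝ) (c : ℝ) :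
    ∑ x, π x * (u x - c) = ∑ x, π x * u x - c := by
  simp only [mul_sub, sum_sub_distrib, ← sum_mul, hπ1, one_mul]

theorem sum_weighted_sq_sub_const (hπ1 : ∑ x, π x = 1) (u : Ω → ℝ) (c : ℝ) :
    ∑ x, π x * (u x - c) ^ 2 = ∑ x, π x * u x ^ 2 - 2 * c * ∑ x, π x * u x + c ^ 2 := by
  have hexpand : ∀ x, π x * (u x - c) ^ 2 = π x * u x ^ 2 - 2 * c * (π x * u x) + c ^ 2 * π x :=
    fun x => by ring
  simp only [hexpand, sum_add_distrib, sum_sub_distrib, ← mul_sum, hπ1, mul_one]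

theorem sum_weighted_sq_sub_mean_le (hπ : ∀ x, 0 ≤ π x) (hπ1 : ∑ x, π x = 1)
    {V : Ω → ℝ} (hV0 : ∀ x, 0 ≤ V x) (hV1 : ∀ x, V x ≤ 1) :
    ∑ x, π x * (V x - ∑ y, π y * V y) ^ 2 ≤ (∑ x, π x * V x) * (1 - ∑ x, π x * V x) := by
  have hsq_le : ∑ x, π x * V x ^ 2 ≤ ∑ x, π x * V x :=
    sum_le_sum fun x _ => mul_le_mul_of_nonneg_left
      (pow_le_of_le_one (hV0 x) (hV1 x) two_ne_zero) (hπ x)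
  rw [sum_weighted_sq_sub_const hπ1]
  nlinarith

theorem sq_sum_weighted_mul_le_of_sum_eq_zero (hπ : ∀ x, 0 ≤ π x) (hπ1 : ∑ x, π x = 1)
    {V : Ω → ℝ} (hV0 : ∀ x, 0 ≤ V x) (hV1 : ∀ x, V x ≤ 1) {g : Ω → ℝ}
    (hg : ∑ x, π x * g x = 0) :
    (∑ x, π x * V x * g x) ^ 2 ≤
      (∑ x, π x * g x ^ 2) * ((∑ x, π x * V x) * (1 - ∑ x, π x * V x)) := by
  set m := ∑ x, π x * V x
  have hcentre : ∑ x, π x * V x * g x = ∑ x, π x * (V x - m) * g x := by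
    simp only [mul_sub, sub_mul, sum_sub_distrib, mul_right_comm _ m, ← sum_mul, hg, zero_mul,
      sub_zero]
  rw [hcentre, mul_comm (∑ x, π x * g x ^ 2)]
  exact (sum_weighted_mul_sq_le_sq_mul_sq hπ _ _).trans (mul_le_mul_of_nonneg_right
    (sum_weighted_sq_sub_mean_le hπ hπ1 hV0 hV1)
    (sum_nonneg fun x _ => mul_nonneg (hπ x) (sq_nonneg _)))

theorem sum_weighted_mul_map_sub_const {L : (Ω → ℝ) →ₗ[ℝ] (Ω → ℝ)}
    (hsym : ∀ f g : Ω → ℝ, ∑ x, π x * f x * L g x = ∑ x, π x * g x * L f x)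
    (hconst : L (fun _ => 1) = 0) (f : Ω → ℝ) (c : ℝ) :
    ∑ x, π x * (f x - c) * L (fun y => f y - c) x = ∑ x, π x * f x * L f x := by
  have hLsub : L (fun y => f y - c) = L f := by
    rw [show (fun y => f y - c) = f - c • fun _ => 1 by ext; simp, map_sub, map_smul, hconst,
      smul_zero, sub_zero]
  have hLf_mean : ∑ x, π x * L f x = 0 := by
    simpa [hconst] using hsym (fun _ => 1) f
  simp only [hLsub, mul_sub, sub_mul, sum_sub_distrib, mul_right_comm _ c, ← sum_mul,
    hLf_mean, zero_mul, sub_zero]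

theorem sum_weighted_potential_mul_sq_le (hπ : ∀ x, 0 ≤ π x) (hπ1 : ∑ x, π x = 1)
    {V : Ω → ℝ} (hV0 : ∀ x, 0 ≤ V x) (hV1 : ∀ x, V x ≤ 1) (f : Ω → ℝ) :
    ∑ x, π x * V x * f x ^ 2 ≤
      ∑ x, π x * (f x - ∑ y, π y * f y) ^ 2 + (∑ x, π x * V x) * (∑ x, π x * f x) ^ 2
        + 2 * |∑ x, π x * f x| * √((∑ x, π x * (f x - ∑ y, π y * f y) ^ 2)
          * (∑ x, π x * V x) * (1 - ∑ x, π x * V x)) := by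
  set a := ∑ x, π x * f x
  set m := ∑ x, π x * V x
  set g : Ω → ℝ := fun x => f x - a
  have hg : ∑ x, π x * g x = 0 := by rw [sum_weighted_sub_const hπ1, sub_self]
  have hdecomp : ∑ x, π x * V x * f x ^ 2
      = ∑ x, π x * V x * g x ^ 2 + m * a ^ 2 + 2 * a * ∑ x, π x * V x * g x := by
    have hexpand : ∀ x, π x * V x * f x ^ 2
        = π x * V x * g x ^ 2 + a ^ 2 * (π x * V x) + 2 * a * (π x * V x * g x) :=
      fun x => by simp only [g]; ring
    simp only [hexpand, sum_add_distrib, ← mul_sum]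
    ring
  have hquad : ∑ x, π x * V x * g x ^ 2 ≤ ∑ x, π x * g x ^ 2 :=
    sum_le_sum fun x _ => calc
      π x * V x * g x ^ 2 = π x * g x ^ 2 * V x := by ring
      _ ≤ π x * g x ^ 2 := mul_le_of_le_one_right (mul_nonneg (hπ x) (sq_nonneg _)) (hV1 x)
  have hcross : a * ∑ x, π x * V x * g x ≤ |a| * √((∑ x, π x * g x ^ 2) * m * (1 - m)) := by
    calc a * ∑ x, π x * V x * g x ≤ |a| * |∑ x, π x * V x * g x| := by
          rw [← abs_mul]; exact le_abs_self _
      _ ≤ |a| * √((∑ x, π x * g x ^ 2) * m * (1 - m)) := by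
          gcongr
          rw [← Real.sqrt_sq_eq_abs, mul_assoc]
          exact Real.sqrt_le_sqrt (sq_sum_weighted_mul_le_of_sum_eq_zero hπ hπ1 hV0 hV1 hg)
  linarith

end WeightedSums

theorem feynman_kac_top_bound_general {Ω : Type*} [Fintype Ω]
    (π : Ω → ℝ) (hπ : ∀ x, 0 < π x) (hπ1 : ∑ x, π x = 1)
    (L : (Ω → ℝ) →ₗ[ℝ] (Ω → ℝ))
    (hsym : ∀ f g : Ω → ℝ, ∑ x, π x * f x * L g x = ∑ x, π x * g x * L f x)
    (hconst : L (fun _ => 1) = 0)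
    (γ : ℝ)
    (hgap : ∀ g : Ω → ℝ, (∑ x, π x * g x) = 0 →
      ∑ x, π x * g x * L g x ≤ -γ * ∑ x, π x * g x ^ 2)
    (V : Ω → ℝ) (hV0 : ∀ x, 0 ≤ V x) (hV1 : ∀ x, V x ≤ 1)
    (lam : ℝ) (hlam : 0 < lam)
    (f : Ω → ℝ) (hf : ∑ x, π x * f x ^ 2 = 1) :
    ∃ α : ℝ, 0 ≤ α ∧ α ≤ 1 ∧
      ∑ x, π x * f x * (L f x + lam * V x * f x) ≤
        lam * ((1 - γ / lam) * (1 - α ^ 2) + (∑ x, π x * V x) * α ^ 2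
          + 2 * α * Real.sqrt ((1 - α ^ 2) * (∑ x, π x * V x) * (1 - ∑ x, π x * V x))) := by
  have hπ0 : ∀ x, 0 ≤ π x := fun x => (hπ x).le
  have hpotential := sum_weighted_potential_mul_sq_le hπ0 hπ1 hV0 hV1 f
  set a := ∑ x, π x * f x
  have hvar : ∑ x, π x * (f x - a) ^ 2 = 1 - a ^ 2 := by
    rw [sum_weighted_sq_sub_const hπ1, hf]; ring
  have hkinetic : ∑ x, π x * f x * L f x ≤ -γ * (1 - a ^ 2) := by
    rw [← sum_weighted_mul_map_sub_const hsym hconst f a, ← hvar]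
    exact hgap _ (by rw [sum_weighted_sub_const hπ1, sub_self])
  rw [hvar] at hpotential
  have hsplit : ∑ x, π x * f x * (L f x + lam * V x * f x)
      = ∑ x, π x * f x * L f x + lam * ∑ x, π x * V x * f x ^ 2 := by
    rw [mul_sum, ← sum_add_distrib]
    exact sum_congr rfl fun x _ => by ring
  have ha_sq : a ^ 2 ≤ 1 := by
    linarith [hvar ▸ sum_nonneg fun x _ => mul_nonneg (hπ0 x) (sq_nonneg (f x - a))]
  have hlam_gap : lam * (1 - γ / lam) = lam - γ := by field_simp
  refine ⟨|a|, abs_nonneg a, (sq_le_one_iff_abs_le_one a).1 ha_sq, ?_⟩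
  rw [hsplit, sq_abs, mul_add, mul_add, ← mul_assoc, hlam_gap]
  linarith [mul_le_mul_of_nonneg_left hpotential hlam.le]

/-- **Feynman–Kac spectral bound.**  Let `L` be a self-adjoint (w.r.t. the probability
measure `π` on a finite state space) Markov generator with `L 1 = 0` and spectral gap
`γ > 0`, and let `V` be multiplication by a function with `0 ≤ V ≤ 1`.  For `λ > 0`, the
top of the spectrum `β_λ` of `H_λ = L + λ V`, i.e. the supremum of `⟨f, H_λ f⟩` over unit
vectors `f`, satisfies
`β_λ/λ ≤ sup_{0≤α≤1} {(1-γ/λ)(1-α²) + π(V)α² + 2α √((1-α²) π(V)(1-π(V)))}`. -/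
theorem feynman_kac_top_bound {Ω : Type*} [Fintype Ω]
    (π : Ω → ℝ) (hπ : ∀ x, 0 < π x) (hπ1 : ∑ x, π x = 1)
    (L : (Ω → ℝ) →ₗ[ℝ] (Ω → ℝ))
    (hsym : ∀ f g : Ω → ℝ, ∑ x, π x * f x * L g x = ∑ x, π x * g x * L f x)
    (hconst : L (fun _ => 1) = 0)
    (γ : ℝ) (hγ : 0 < γ)
    (hgap : ∀ g : Ω → ℝ, (∑ x, π x * g x) = 0 →
      ∑ x, π x * g x * L g x ≤ -γ * ∑ x, π x * g x ^ 2)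
    (V : Ω → ℝ) (hV0 : ∀ x, 0 ≤ V x) (hV1 : ∀ x, V x ≤ 1)
    (lam : ℝ) (hlam : 0 < lam)
    (f : Ω → ℝ) (hf : ∑ x, π x * f x ^ 2 = 1) :
    ∃ α : ℝ, 0 ≤ α ∧ α ≤ 1 ∧
      ∑ x, π x * f x * (L f x + lam * V x * f x) ≤
        lam * ((1 - γ / lam) * (1 - α ^ 2) + (∑ x, π x * V x) * α ^ 2
          + 2 * α * Real.sqrt ((1 - α ^ 2) * (∑ x, π x * V x) * (1 - ∑ x, π x * V x))) :=
  feynman_kac_top_bound_general π hπ hπ1 L hsym hconst γ hgap V hV0 hV1 lam hlam f hf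
end

section
/- Let m be the probability measure on {1,…,L} with m(k) = q p^{k−1} for 1 ≤ k ≤ L−1 and m(L) = p^{L−1}, where p = 1−q, q ∈ (0,1). For the test function g(k) = λ^{k−1} with pλ = 1 − ε, as ε → 0 one has m(g) = 1 + q(L−1) + o(1) and m(g log g) = (1/2)(L−1)(qL + 2p)·log(1/p) + o(1). Consequently the entropy Ent_m(g) = m(g log(g/m(g))) is bounded below by c·L² + o(1) for some constant c = c(q) > 0 independent of L. -/
open Filter Topology

noncomputable section

/-- The law `m` on `{1,…,L}` of the position of the leftmost empty site:
`m(k) = q p^{k-1}` for `1 ≤ k ≤ L-1` and `m(L) = p^{L-1}`, with `p = 1-q`. -/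
def mwt (q : ℝ) (L k : ℕ) : ℝ :=
  if k = L then (1 - q) ^ (L - 1) else q * (1 - q) ^ (k - 1)

/-- The test function `g(k) = λ^{k-1}` with `pλ = 1 - ε`. -/
def gTest (q ε : ℝ) (k : ℕ) : ℝ := ((1 - ε) / (1 - q)) ^ (k - 1)

def mg (q : ℝ) (L : ℕ) (ε : ℝ) : ℝ :=
  ∑ k ∈ Finset.Icc 1 L, mwt q L k * gTest q ε k

def mgLog (q : ℝ) (L : ℕ) (ε : ℝ) : ℝ :=
  ∑ k ∈ Finset.Icc 1 L, mwt q L k * gTest q ε k * Real.log (gTest q ε k)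

/-- The entropy `Ent_m(g) = m(g log g) - m(g) log m(g)`. -/
def entm (q : ℝ) (L : ℕ) (ε : ℝ) : ℝ :=
  mgLog q L ε - mg q L ε * Real.log (mg q L ε)

/-! At `ε = 0` each site `k < L` carries `m(k) g(k) = q` and the last site carries `1`; both
`m(g)` and `m(g log g)` are finite sums continuous in `ε`, so their limits follow from
`∑_{k ≤ L} (k - 1) = L(L-1)/2`. With `t = log (1/p)` and `x = q(L-1)`, the limiting entropy
satisfies `q · Ent = ½ x (x + 2 - q) t - q (1 + x) log (1 + x)`. The bounds
`(1 + x) log (1 + x) ≤ x + x²/2` (from `u ≤ sinh u`) and `t ≥ 2q/(2 - q)` (first term of the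
series of `log (1 + a⁻¹)`) leave at least `½ (t - q) x²`, which is of order `L²` because
`t > q`. -/

open Finset

namespace Real

lemma log_le_half_sub_inv {y : ℝ} (hy : 1 ≤ y) : log y ≤ (y - y⁻¹) / 2 := by
  rw [← sinh_log (by linarith)]
  exact self_le_sinh_iff.2 (log_nonneg hy)

lemma one_add_mul_log_one_add_le {x : ℝ} (hx : 0 ≤ x) :
    (1 + x) * log (1 + x) ≤ x + x ^ 2 / 2 := by
  have h1x : 0 < 1 + x := by linarith
  calc (1 + x) * log (1 + x) ≤ (1 + x) * ((1 + x - (1 + x)⁻¹) / 2) :=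
        mul_le_mul_of_nonneg_left (log_le_half_sub_inv (by linarith)) h1x.le
    _ = x + x ^ 2 / 2 := by field_simp; ring

lemma two_mul_div_two_sub_le_log_one_div_one_sub {q : ℝ} (hq : 0 < q) (hq1 : q < 1) :
    2 * q / (2 - q) ≤ log (1 / (1 - q)) := by
  have hp : 0 < 1 - q := sub_pos.2 hq1
  have hs := hasSum_log_one_add_inv (div_pos hp hq)
  have h1 : 1 + ((1 - q) / q)⁻¹ = 1 / (1 - q) := by field_simp; ring
  have h2 : 1 / (2 * ((1 - q) / q) + 1) = q / (2 - q) := by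
    rw [show 2 * ((1 - q) / q) + 1 = (2 - q) / q by field_simp; ring, one_div_div]
  rw [h1, h2] at hs
  have hq2 : 0 < q / (2 - q) := div_pos hq (by linarith)
  simpa [mul_div_assoc'] using le_hasSum hs 0 fun k _ => by positivity

end Real

section

variable {q : ℝ}

lemma mwt_mul_gTest_zero (hq1 : q ≠ 1) (L k : ℕ) :
    mwt q L k * gTest q 0 k = if k = L then 1 else q := by
  have hp : 1 - q ≠ 0 := sub_ne_zero.2 (Ne.symm hq1)
  unfold mwt gTest
  split_ifs with hk
  · subst hk; rw [← mul_pow]; field_simp; simp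
  · rw [mul_assoc, ← mul_pow]; field_simp; simp

lemma log_gTest_zero (k : ℕ) :
    Real.log (gTest q 0 k) = (k - 1 : ℕ) * Real.log (1 / (1 - q)) := by
  simp [gTest, Real.log_pow]

lemma sum_Icc_natCast_sub_one (n : ℕ) : ∑ k ∈ Icc 1 n, ((k - 1 : ℕ) : ℝ) = n * (n - 1) / 2 := by
  induction n with
  | zero => simp
  | succ n ih => rw [sum_Icc_succ_top (by omega), ih]; push_cast; ring

lemma sum_Icc_ite_eq_top_mul (n : ℕ) (a b : ℝ) (f : ℕ → ℝ) :
    ∑ k ∈ Icc 1 (n + 1), (if k = n + 1 then a else b) * f k =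
      b * ∑ k ∈ Icc 1 n, f k + a * f (n + 1) := by
  rw [sum_Icc_succ_top (by omega), if_pos rfl, mul_sum]
  congr 1
  exact sum_congr rfl fun k hk => by rw [if_neg (by grind)]

lemma mg_zero (hq1 : q ≠ 1) {L : ℕ} (hL : 1 ≤ L) : mg q L 0 = 1 + q * (L - 1) := by
  obtain ⟨n, rfl⟩ : ∃ n, L = n + 1 := ⟨L - 1, by omega⟩
  simp only [mg, mwt_mul_gTest_zero hq1]
  simpa [add_comm] using sum_Icc_ite_eq_top_mul n 1 q fun _ => 1

lemma mgLog_zero (hq1 : q ≠ 1) {L : ℕ} (hL : 1 ≤ L) :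
    mgLog q L 0 = 1 / 2 * (L - 1) * (q * L + 2 * (1 - q)) * Real.log (1 / (1 - q)) := by
  obtain ⟨n, rfl⟩ : ∃ n, L = n + 1 := ⟨L - 1, by omega⟩
  simp only [mgLog, mwt_mul_gTest_zero hq1, log_gTest_zero, mul_assoc]
  rw [sum_Icc_ite_eq_top_mul, ← sum_mul, sum_Icc_natCast_sub_one]
  push_cast
  ring

lemma continuous_mg (L : ℕ) : Continuous (mg q L) := by
  unfold mg gTest
  fun_prop

lemma continuousAt_mgLog (hq1 : q ≠ 1) (L : ℕ) : ContinuousAt (mgLog q L) 0 := by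
  have hg : ∀ k, gTest q 0 k ≠ 0 := fun k =>
    pow_ne_zero _ (by simpa using sub_ne_zero.2 (Ne.symm hq1))
  refine tendsto_finsetSum _ fun k _ => ?_
  have : Continuous fun ε => gTest q ε k := by unfold gTest; fun_prop
  exact (continuousAt_const.mul this.continuousAt).mul (this.continuousAt.log (hg k))

lemma continuousAt_entm (hq : 0 ≤ q) (hq1 : q ≠ 1) {L : ℕ} (hL : 1 ≤ L) :
    ContinuousAt (entm q L) 0 := by
  have hmg : mg q L 0 ≠ 0 := by
    rw [mg_zero hq1 hL]
    have : (1 : ℝ) ≤ L := by exact_mod_cast hL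
    nlinarith
  exact (continuousAt_mgLog hq1 L).sub
    ((continuous_mg L).continuousAt.mul ((continuous_mg L).continuousAt.log hmg))

lemma exists_pos_mul_sq_le_limit_entropy (hq : 0 < q) (hq1 : q < 1) :
    ∃ c : ℝ, 0 < c ∧ ∀ L : ℝ, 2 ≤ L → c * L ^ 2 ≤
      1 / 2 * (L - 1) * (q * L + 2 * (1 - q)) * Real.log (1 / (1 - q))
        - (1 + q * (L - 1)) * Real.log (1 + q * (L - 1)) := by
  set t := Real.log (1 / (1 - q))
  have ht : 2 * q ≤ t * (2 - q) := by
    have := Real.two_mul_div_two_sub_le_log_one_div_one_sub hq hq1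
    rwa [div_le_iff₀ (by linarith)] at this
  have hqt : q < t := by nlinarith
  refine ⟨q * (t - q) / 8, by positivity, fun L hL => ?_⟩
  set x := q * (L - 1)
  have hx : 0 ≤ x := mul_nonneg hq.le (by linarith)
  have hxL : q * L / 2 ≤ x := by nlinarith
  have hent := Real.one_add_mul_log_one_add_le hx
  rw [← mul_le_mul_iff_right₀ hq]
  calc q * (q * (t - q) / 8 * L ^ 2) = (t - q) / 2 * (q * L / 2) ^ 2 := by ring
    _ ≤ (t - q) / 2 * x ^ 2 := by gcongr
    _ ≤ (t - q) / 2 * x ^ 2 + x * (t * (2 - q) - 2 * q) / 2 := by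
      have : 0 ≤ x * (t * (2 - q) - 2 * q) := mul_nonneg hx (by linarith)
      linarith
    _ = q * (1 / 2 * (L - 1) * (q * L + 2 * (1 - q)) * t) - q * (x + x ^ 2 / 2) := by ring
    _ ≤ q * (1 / 2 * (L - 1) * (q * L + 2 * (1 - q)) * t - (1 + x) * Real.log (1 + x)) := by
      have := mul_le_mul_of_nonneg_left hent hq.le
      linarith

end

/-- **Test-function computation for the log-Sobolev lower bound.**  As `ε → 0⁺`,
`m(g) → 1 + q(L-1)` and `m(g log g) → ½ (L-1)(qL + 2p) log(1/p)`; consequently there is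
a constant `c = c(q) > 0`, independent of `L`, such that the limiting entropy is bounded
below by `c L²`. -/
theorem logSobolev_test_function (q : ℝ) (hq : 0 < q) (hq1 : q < 1) :
    (∀ L : ℕ, 2 ≤ L →
      Tendsto (fun ε : ℝ => mg q L ε) (𝓝[>] 0) (𝓝 (1 + q * ((L : ℝ) - 1))) ∧
      Tendsto (fun ε : ℝ => mgLog q L ε) (𝓝[>] 0)
        (𝓝 ((1 / 2) * ((L : ℝ) - 1) * (q * L + 2 * (1 - q)) * Real.log (1 / (1 - q))))) ∧
    (∃ c : ℝ, 0 < c ∧ ∀ L : ℕ, 2 ≤ L →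
      c * (L : ℝ) ^ 2 ≤ Filter.liminf (fun ε : ℝ => entm q L ε) (𝓝[>] (0 : ℝ))) := by
  have tendsto_of_continuousAt {f : ℝ → ℝ} (hf : ContinuousAt f 0) :
      Tendsto f (𝓝[>] 0) (𝓝 (f 0)) :=
    hf.tendsto.mono_left nhdsWithin_le_nhds
  obtain ⟨c, hc, hent⟩ := exists_pos_mul_sq_le_limit_entropy hq hq1
  refine ⟨fun L hL => ⟨?_, ?_⟩, c, hc, fun L hL => ?_⟩
  · rw [← mg_zero hq1.ne (by omega)]
    exact tendsto_of_continuousAt (continuous_mg L).continuousAt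
  · rw [← mgLog_zero hq1.ne (by omega)]
    exact tendsto_of_continuousAt (continuousAt_mgLog hq1.ne L)
  · rw [(tendsto_of_continuousAt (continuousAt_entm hq.le hq1.ne (by omega))).liminf_eq, entm,
      mg_zero hq1.ne (by omega), mgLog_zero hq1.ne (by omega)]
    exact hent L (by exact_mod_cast hL)
end
end

section
/- In the proof of the spectral gap lower bound for the East model via the bisection-constrained method: for Λ = Λ₁ ∪ Λ₂ with overlap I = Λ₁ ∩ Λ₂ and blocks B₁ = Λ∖Λ₂, B₂ = Λ₂, the constrained term satisfies π_Λ(c₁·Var_{B₁}(f)) ≤ gap(L_{Λ₁})^{-1} · π_Λ(Σ_{x∈Λ₁} c_x^Λ Var_x(f)), where c₁(σ) is the indicator that σ has at least one zero in I. -/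
/-!
Split the event "`I = [m₂, m₁]` contains a zero" according to the position `y` of its rightmost
zero. This event does not see the sites of `B = [a, y-1] ⊇ B₁`, so after conditioning on the
configuration outside `B` it suffices to bound `π_B(Var_{B₁} f) ≤ Var_B f` (law of total
variance) and then apply the Poincaré inequality of the East chain on `B` with its zero boundary
condition at `y`. The gap of that chain is at least `gap(L_{Λ₁})`, because a function of the
sites of `B` has the same variance on `Λ₁` and a smaller Dirichlet form there; and as `σ_y = 0`,
its constraints are dominated by the constraints `c_x^Λ`.
-/
noncomputable section
open Finset

/-- Patch a configuration on the finite set `S` of sites. -/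
def patch (S : Finset ℤ) (τ : S → Bool) (η : ℤ → Bool) : ℤ → Bool :=
  fun x => if h : x ∈ S then τ ⟨x, h⟩ else η x

/-- Weight of a local configuration under the product Bernoulli(1-q) measure
(`true` = occupied, with probability `1-q`; `false` = empty, with probability `q`). -/
def wt (q : ℝ) (S : Finset ℤ) (τ : S → Bool) : ℝ :=
  ∏ x : S, (if τ x then 1 - q else q)

/-- Conditional mean over the sites in `S`, the configuration outside `S` being `η`. -/
def condMean (q : ℝ) (S : Finset ℤ) (f : (ℤ → Bool) → ℝ) (η : ℤ → Bool) : ℝ :=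
  ∑ τ : S → Bool, wt q S τ * f (patch S τ η)

/-- Conditional variance over the sites in `S`. -/
def condVar (q : ℝ) (S : Finset ℤ) (f : (ℤ → Bool) → ℝ) (η : ℤ → Bool) : ℝ :=
  condMean q S (fun σ => (f σ - condMean q S f η) ^ 2) η

/-- East constraint on `[a,b]` with a frozen zero at `b+1`. -/
def cE (b x : ℤ) (η : ℤ → Bool) : ℝ :=
  if x = b then 1 else if η (x + 1) then 0 else 1

def allOnes : ℤ → Bool := fun _ => true

/-- Mean w.r.t. the product Bernoulli(1-q) measure on `[a,b]`. -/
def meanI (q : ℝ) (a b : ℤ) (f : (ℤ → Bool) → ℝ) : ℝ :=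
  condMean q (Finset.Icc a b) f allOnes

/-- Variance w.r.t. the product Bernoulli(1-q) measure on `[a,b]`. -/
def varI (q : ℝ) (a b : ℤ) (f : (ℤ → Bool) → ℝ) : ℝ :=
  condVar q (Finset.Icc a b) f allOnes

/-- Dirichlet form of the East model on `[a,b]` with frozen zero at `b+1`. -/
def dirI (q : ℝ) (a b : ℤ) (f : (ℤ → Bool) → ℝ) : ℝ :=
  meanI q a b (fun σ => ∑ x ∈ Finset.Icc a b, cE b x σ * condVar q {x} f σ)

/-- Spectral gap of the East model on `[a,b]` with frozen zero at `b+1`. -/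
def gapI (q : ℝ) (a b : ℤ) : ℝ :=
  sInf {r : ℝ | ∃ f : (ℤ → Bool) → ℝ, varI q a b f ≠ 0 ∧ r = dirI q a b f / varI q a b f}

section ConditionalMeans

variable {q : ℝ} {S T U : Finset ℤ} {f g : (ℤ → Bool) → ℝ} {η ζ : ℤ → Bool}

lemma patch_apply_of_mem {x : ℤ} (hx : x ∈ S) (τ : S → Bool) (η : ℤ → Bool) :
    patch S τ η x = τ ⟨x, hx⟩ := dif_pos hx

lemma patch_apply_of_notMem {x : ℤ} (hx : x ∉ S) (τ : S → Bool) (η : ℤ → Bool) :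
    patch S τ η x = η x := dif_neg hx

lemma patch_congr_outside (h : ∀ x ∉ S, η x = ζ x) (τ : S → Bool) :
    patch S τ η = patch S τ ζ := by
  funext x
  by_cases hx : x ∈ S
  · simp only [patch_apply_of_mem hx]
  · simp only [patch_apply_of_notMem hx, h x hx]

lemma wt_nonneg (hq0 : 0 ≤ q) (hq1 : q ≤ 1) (τ : S → Bool) : 0 ≤ wt q S τ :=
  prod_nonneg fun _ _ => by split <;> linarith

lemma sum_wt : ∑ τ : S → Bool, wt q S τ = 1 :=
  calc ∑ τ : S → Bool, wt q S τ = ∏ _x : S, ∑ b : Bool, (if b then 1 - q else q) := by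
        rw [Fintype.prod_sum]; rfl
    _ = 1 := by simp

lemma wt_eq_prod_patch (τ : S → Bool) (η : ℤ → Bool) :
    wt q S τ = ∏ x ∈ S, (if patch S τ η x then 1 - q else q) := by
  rw [wt, ← prod_attach S, univ_eq_attach]
  exact prod_congr rfl fun x _ => by rw [patch_apply_of_mem x.2]

def glue (τ₁ : S → Bool) (τ₂ : T → Bool) : (S ∪ T : Finset ℤ) → Bool :=
  fun x => if h : (x : ℤ) ∈ S then τ₁ ⟨x, h⟩
    else τ₂ ⟨x, (mem_union.mp x.2).resolve_left h⟩

lemma patch_glue (hd : Disjoint S T) (τ₁ : S → Bool) (τ₂ : T → Bool) :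
    patch (S ∪ T) (glue τ₁ τ₂) η = patch T τ₂ (patch S τ₁ η) := by
  funext x
  by_cases hxS : x ∈ S
  · rw [patch_apply_of_mem (mem_union_left _ hxS),
      patch_apply_of_notMem (disjoint_left.mp hd hxS), patch_apply_of_mem hxS]
    simp [glue, hxS]
  · by_cases hxT : x ∈ T
    · rw [patch_apply_of_mem (mem_union_right _ hxT), patch_apply_of_mem hxT]
      simp [glue, hxS]
    · rw [patch_apply_of_notMem (by simp [hxS, hxT]), patch_apply_of_notMem hxT,
        patch_apply_of_notMem hxS]

lemma wt_glue (hd : Disjoint S T) (τ₁ : S → Bool) (τ₂ : T → Bool) :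
    wt q (S ∪ T) (glue τ₁ τ₂) = wt q S τ₁ * wt q T τ₂ := by
  rw [wt_eq_prod_patch _ (fun _ => true), prod_union hd, wt_eq_prod_patch τ₁ (fun _ => true),
    wt_eq_prod_patch τ₂ (fun _ => true)]
  congr 1 <;> refine prod_congr rfl fun x hx => ?_
  · rw [patch_apply_of_mem (mem_union_left _ hx), patch_apply_of_mem hx]
    simp [glue, hx]
  · rw [patch_apply_of_mem (mem_union_right _ hx), patch_apply_of_mem hx]
    simp [glue, disjoint_right.mp hd hx]

def glueEquiv (hd : Disjoint S T) :
    (S → Bool) × (T → Bool) ≃ ((S ∪ T : Finset ℤ) → Bool) where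
  toFun p := glue p.1 p.2
  invFun τ :=
    (fun x => τ ⟨x, mem_union_left _ x.2⟩, fun x => τ ⟨x, mem_union_right _ x.2⟩)
  left_inv p := by
    ext x
    · simp [glue, x.2]
    · simp [glue, disjoint_right.mp hd x.2]
  right_inv τ := by
    funext x
    by_cases hxS : (x : ℤ) ∈ S <;> simp [glue, hxS]

lemma condMean_congr (h : ∀ τ : S → Bool, f (patch S τ η) = g (patch S τ ζ)) :
    condMean q S f η = condMean q S g ζ :=
  sum_congr rfl fun τ _ => by rw [h τ]

lemma condMean_congr_outside (h : ∀ x ∉ S, η x = ζ x) :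
    condMean q S f η = condMean q S f ζ :=
  condMean_congr fun τ => by rw [patch_congr_outside h]

lemma condVar_congr_outside (h : ∀ x ∉ S, η x = ζ x) :
    condVar q S f η = condVar q S f ζ := by
  rw [condVar, condVar, condMean_congr_outside (f := f) h]
  exact condMean_congr_outside h

lemma condMean_const (c : ℝ) : condMean q S (fun _ => c) η = c := by
  rw [condMean, ← sum_mul, sum_wt, one_mul]

lemma condMean_sum {ι : Type*} (A : Finset ι) (F : ι → (ℤ → Bool) → ℝ) :
    condMean q S (fun σ => ∑ i ∈ A, F i σ) η = ∑ i ∈ A, condMean q S (F i) η := by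
  simp only [condMean, mul_sum]
  exact sum_comm

lemma condMean_add :
    condMean q S (fun σ => f σ + g σ) η = condMean q S f η + condMean q S g η := by
  simp only [condMean, mul_add, sum_add_distrib]

lemma condMean_const_mul (c : ℝ) :
    condMean q S (fun σ => c * f σ) η = c * condMean q S f η := by
  simp only [condMean, mul_sum, mul_left_comm]

lemma condMean_nonneg (hq0 : 0 ≤ q) (hq1 : q ≤ 1) (hf : ∀ σ, 0 ≤ f σ) :
    0 ≤ condMean q S f η :=
  sum_nonneg fun τ _ => mul_nonneg (wt_nonneg hq0 hq1 τ) (hf _)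

lemma condMean_mono (hq0 : 0 ≤ q) (hq1 : q ≤ 1)
    (hfg : ∀ τ : S → Bool, f (patch S τ η) ≤ g (patch S τ η)) :
    condMean q S f η ≤ condMean q S g η :=
  sum_le_sum fun τ _ => mul_le_mul_of_nonneg_left (hfg τ) (wt_nonneg hq0 hq1 τ)

lemma condVar_nonneg (hq0 : 0 ≤ q) (hq1 : q ≤ 1) : 0 ≤ condVar q S f η :=
  condMean_nonneg hq0 hq1 fun _ => sq_nonneg _

lemma condMean_union (hd : Disjoint S T) :
    condMean q (S ∪ T) f η = condMean q S (condMean q T f) η := by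
  rw [condMean, ← (glueEquiv hd).sum_comp, Fintype.sum_prod_type]
  refine sum_congr rfl fun τ₁ _ => ?_
  rw [condMean, mul_sum]
  refine sum_congr rfl fun τ₂ _ => ?_
  change wt q (S ∪ T) (glue τ₁ τ₂) * f (patch (S ∪ T) (glue τ₁ τ₂) η) = _
  rw [wt_glue hd, patch_glue hd, mul_assoc]

lemma condMean_eq_condMean_sdiff (h : S ⊆ U) :
    condMean q U f η = condMean q (U \ S) (condMean q S f) η := by
  conv_lhs => rw [← sdiff_union_of_subset h]
  exact condMean_union sdiff_disjoint

def IndepOfSites (S : Finset ℤ) (f : (ℤ → Bool) → ℝ) : Prop :=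
  ∀ (τ : S → Bool) (η : ℤ → Bool), f (patch S τ η) = f η

lemma indepOfSites_condMean : IndepOfSites S (condMean q S f) :=
  fun τ η => condMean_congr_outside fun _ hx => patch_apply_of_notMem hx τ η

lemma condMean_of_indepOfSites (hf : IndepOfSites S f) : condMean q S f η = f η := by
  rw [← condMean_const (q := q) (S := S) (η := η) (f η)]
  exact condMean_congr fun τ => hf τ η

lemma condMean_mul_of_indepOfSites (hg : IndepOfSites S g) :
    condMean q S (fun σ => g σ * f σ) η = g η * condMean q S f η := by
  rw [condMean, condMean, mul_sum]
  exact sum_congr rfl fun τ _ => by rw [hg τ η, mul_left_comm]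

lemma condVar_of_indepOfSites (hf : IndepOfSites S f) : condVar q S f η = 0 := by
  rw [condVar, condMean_of_indepOfSites hf, ← condMean_const (q := q) (S := S) (η := η) 0]
  exact condMean_congr fun τ => by simp [hf τ η]

lemma condMean_condMean (h : S ⊆ U) :
    condMean q U (condMean q S f) η = condMean q U f η := by
  rw [condMean_eq_condMean_sdiff h, condMean_eq_condMean_sdiff h (f := f)]
  congr 1
  funext ζ
  exact condMean_of_indepOfSites indepOfSites_condMean

lemma condMean_of_subset_of_indepOfSites (h : S ⊆ U) (hf : IndepOfSites (U \ S) f) :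
    condMean q U f η = condMean q S f η := by
  conv_lhs => rw [← union_sdiff_of_subset h]
  rw [condMean_union disjoint_sdiff]
  exact condMean_congr fun τ => condMean_of_indepOfSites hf

lemma condVar_of_subset_of_indepOfSites (h : S ⊆ U) (hf : IndepOfSites (U \ S) f) :
    condVar q U f η = condVar q S f η := by
  rw [condVar, condVar, condMean_of_subset_of_indepOfSites h hf]
  exact condMean_of_subset_of_indepOfSites h fun τ ρ => by simp only [hf τ ρ]

lemma condMean_sub_sq (c : ℝ) :
    condMean q S (fun ρ => (f ρ - c) ^ 2) η
      = condVar q S f η + (condMean q S f η - c) ^ 2 := by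
  set m := condMean q S f η
  have hexpand : (fun ρ => (f ρ - c) ^ 2)
      = fun ρ => (f ρ - m) ^ 2 + ((2 * (m - c)) * f ρ + ((m - c) ^ 2 - 2 * (m - c) * m)) := by
    funext ρ; ring
  rw [hexpand, condMean_add, condMean_add, condMean_const_mul, condMean_const, condVar]
  ring

lemma condMean_condVar_le (hq0 : 0 ≤ q) (hq1 : q ≤ 1) (h : S ⊆ U) :
    condMean q U (condVar q S f) η ≤ condVar q U f η := by
  set c := condMean q U f η
  calc condMean q U (condVar q S f) η
      ≤ condMean q U (condMean q S fun ρ => (f ρ - c) ^ 2) η :=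
        condMean_mono hq0 hq1 fun _ => by
          rw [condMean_sub_sq c]; exact le_add_of_nonneg_right (sq_nonneg _)
    _ = condVar q U f η := condMean_condMean h

end ConditionalMeans

section EastChain

variable {q : ℝ} {S S' T : Finset ℤ} {f : (ℤ → Bool) → ℝ} {η ζ σ : ℤ → Bool}

def freezeOutside (S : Finset ℤ) (η σ : ℤ → Bool) : ℤ → Bool :=
  fun x => if x ∈ S then σ x else η x

lemma freezeOutside_patch (h : S' ⊆ S) (τ : S' → Bool) :
    freezeOutside S η (patch S' τ σ) = patch S' τ (freezeOutside S η σ) := by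
  funext x
  by_cases hx : x ∈ S'
  · simp [freezeOutside, h hx, patch_apply_of_mem hx]
  · simp [freezeOutside, patch_apply_of_notMem hx]

lemma condMean_comp_freezeOutside (h : S' ⊆ S) :
    condMean q S' (fun ρ => f (freezeOutside S η ρ)) σ
      = condMean q S' f (freezeOutside S η σ) :=
  condMean_congr fun τ => by rw [freezeOutside_patch h]

lemma condVar_comp_freezeOutside (h : S' ⊆ S) :
    condVar q S' (fun ρ => f (freezeOutside S η ρ)) σ
      = condVar q S' f (freezeOutside S η σ) := by
  rw [condVar, condVar, condMean_comp_freezeOutside h]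
  exact condMean_comp_freezeOutside (f := fun ρ => (f ρ - _) ^ 2) h

lemma condVar_comp_freezeOutside_self :
    condVar q S (fun ρ => f (freezeOutside S η ρ)) ζ = condVar q S f η := by
  rw [condVar_comp_freezeOutside subset_rfl]
  exact condVar_congr_outside fun x hx => if_neg hx

lemma condMean_comp_freezeOutside_self :
    condMean q S (fun ρ => f (freezeOutside S η ρ)) ζ = condMean q S f η := by
  rw [condMean_comp_freezeOutside subset_rfl]
  exact condMean_congr_outside fun x hx => if_neg hx

lemma indepOfSites_comp_freezeOutside (hd : Disjoint S T) :
    IndepOfSites T (fun ρ => f (freezeOutside S η ρ)) := by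
  intro τ ρ
  change f _ = f _
  congr 1
  funext x
  unfold freezeOutside
  split_ifs with hx
  exacts [patch_apply_of_notMem (disjoint_left.mp hd hx) τ ρ, rfl]

lemma cE_nonneg (b x : ℤ) (σ : ℤ → Bool) : 0 ≤ cE b x σ := by
  unfold cE; split_ifs <;> norm_num

lemma cE_le_one (b x : ℤ) (σ : ℤ → Bool) : cE b x σ ≤ 1 := by
  unfold cE; split_ifs <;> norm_num

/-- An empty site at `b' + 1` acts as the frozen zero boundary of the chain on `[·, b']`. -/
lemma cE_le_cE_of_eq_false {b' : ℤ} (b x : ℤ) (h : σ (b' + 1) = false) :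
    cE b' x σ ≤ cE b x σ := by
  unfold cE
  split_ifs <;> simp_all

lemma cE_le_cE_freezeOutside {a b' m x : ℤ} (hx : x ∈ Icc a b') (hb : b' ≤ m) :
    cE m x σ ≤ cE b' x (freezeOutside (Icc a b') η σ) := by
  rw [mem_Icc] at hx
  by_cases hxb : x = b'
  · simpa [cE, hxb] using cE_le_one m x σ
  · have hx1 : x + 1 ∈ Icc a b' := mem_Icc.mpr ⟨by omega, by omega⟩
    simp [cE, hxb, show x ≠ m by omega, freezeOutside, hx1]

def dirDensity (q : ℝ) (b : ℤ) (S : Finset ℤ) (f : (ℤ → Bool) → ℝ)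
    (σ : ℤ → Bool) : ℝ :=
  ∑ x ∈ S, cE b x σ * condVar q {x} f σ

lemma dirDensity_nonneg (hq0 : 0 ≤ q) (hq1 : q ≤ 1) (b : ℤ) (S : Finset ℤ)
    (f : (ℤ → Bool) → ℝ) (σ : ℤ → Bool) :
    0 ≤ dirDensity q b S f σ :=
  sum_nonneg fun x _ => mul_nonneg (cE_nonneg b x σ) (condVar_nonneg hq0 hq1)

lemma dirDensity_le_of_eq_false (hq0 : 0 ≤ q) (hq1 : q ≤ 1) {a y m : ℤ} (b : ℤ)
    (hy : y ≤ m + 1) (hσ : σ y = false) :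
    dirDensity q (y - 1) (Icc a (y - 1)) f σ ≤ dirDensity q b (Icc a m) f σ :=
  calc dirDensity q (y - 1) (Icc a (y - 1)) f σ
      ≤ ∑ x ∈ Icc a (y - 1), cE b x σ * condVar q {x} f σ :=
        sum_le_sum fun x _ => mul_le_mul_of_nonneg_right
          (cE_le_cE_of_eq_false b x (by rwa [sub_add_cancel])) (condVar_nonneg hq0 hq1)
    _ ≤ dirDensity q b (Icc a m) f σ :=
        sum_le_sum_of_subset_of_nonneg (Icc_subset_Icc_right (by omega)) fun x _ _ =>
          mul_nonneg (cE_nonneg b x σ) (condVar_nonneg hq0 hq1)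

/-- Sites outside `[a, b']` contribute nothing, and on `[a, b']` the frozen zero at `b' + 1`
only relaxes the constraint at `b'`. -/
lemma dirDensity_comp_freezeOutside_le (hq0 : 0 ≤ q) (hq1 : q ≤ 1) {a b' m : ℤ}
    (hb : b' ≤ m) :
    dirDensity q m (Icc a m) (fun ρ => f (freezeOutside (Icc a b') η ρ)) σ
      ≤ dirDensity q b' (Icc a b') f (freezeOutside (Icc a b') η σ) := by
  have hS : Icc a b' ⊆ Icc a m := Icc_subset_Icc_right hb
  rw [dirDensity, ← sum_sdiff hS, sum_eq_zero fun x hx => ?_, zero_add]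
  · refine sum_le_sum fun x hx => ?_
    rw [condVar_comp_freezeOutside (singleton_subset_iff.mpr hx)]
    exact mul_le_mul_of_nonneg_right (cE_le_cE_freezeOutside hx hb) (condVar_nonneg hq0 hq1)
  · rw [condVar_of_indepOfSites (indepOfSites_comp_freezeOutside
      (disjoint_singleton_right.mpr (mem_sdiff.mp hx).2)), mul_zero]

end EastChain

section Bisection

variable {q : ℝ} {f : (ℤ → Bool) → ℝ} {ζ : ℤ → Bool}

lemma dirI_nonneg (hq0 : 0 ≤ q) (hq1 : q ≤ 1) (a b : ℤ) (f : (ℤ → Bool) → ℝ) :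
    0 ≤ dirI q a b f :=
  condMean_nonneg hq0 hq1 fun σ => dirDensity_nonneg hq0 hq1 b _ f σ

lemma gapI_mul_varI_le_dirI (hq0 : 0 ≤ q) (hq1 : q ≤ 1) (a b : ℤ)
    (f : (ℤ → Bool) → ℝ) :
    gapI q a b * varI q a b f ≤ dirI q a b f := by
  have hv0 : 0 ≤ varI q a b f := condVar_nonneg hq0 hq1
  rcases hv0.eq_or_lt with hv | hv
  · rw [← hv, mul_zero]
    exact dirI_nonneg hq0 hq1 a b f
  · rw [← le_div_iff₀ hv]
    refine csInf_le ⟨0, ?_⟩ ⟨f, hv.ne', rfl⟩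
    rintro r ⟨g, -, rfl⟩
    exact div_nonneg (dirI_nonneg hq0 hq1 a b g) (condVar_nonneg hq0 hq1)

/-- A function of the sites of `[a, b']`, frozen to `η` elsewhere, is a test function for
`gapI q a m`: this combines the monotonicity of the gap with the Poincaré inequality. -/
lemma gapI_mul_condVar_le (hq0 : 0 ≤ q) (hq1 : q ≤ 1) {a b' m : ℤ} (hb : b' ≤ m)
    (f : (ℤ → Bool) → ℝ) (η : ℤ → Bool) :
    gapI q a m * condVar q (Icc a b') f η
      ≤ condMean q (Icc a b') (dirDensity q b' (Icc a b') f) η := by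
  set S := Icc a b'
  set g := fun ρ => f (freezeOutside S η ρ)
  have hS : S ⊆ Icc a m := Icc_subset_Icc_right hb
  have hvar : varI q a m g = condVar q S f η := by
    rw [varI, condVar_of_subset_of_indepOfSites hS (indepOfSites_comp_freezeOutside disjoint_sdiff)]
    exact condVar_comp_freezeOutside_self
  have hdir : dirI q a m g ≤ condMean q S (dirDensity q b' S f) η :=
    calc dirI q a m g = condMean q (Icc a m) (dirDensity q m (Icc a m) g) allOnes := rfl
      _ ≤ condMean q (Icc a m) (fun σ => dirDensity q b' S f (freezeOutside S η σ)) allOnes :=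
          condMean_mono hq0 hq1 fun _ => dirDensity_comp_freezeOutside_le hq0 hq1 hb
      _ = condMean q S (fun σ => dirDensity q b' S f (freezeOutside S η σ)) allOnes :=
          condMean_of_subset_of_indepOfSites hS (indepOfSites_comp_freezeOutside disjoint_sdiff)
      _ = condMean q S (dirDensity q b' S f) η := condMean_comp_freezeOutside_self
  exact hvar ▸ (gapI_mul_varI_le_dirI hq0 hq1 a m g).trans hdir

def IsRightmostZero (m y : ℤ) (σ : ℤ → Bool) : Prop :=
  σ y = false ∧ ∀ z ∈ Ioc y m, σ z = true

instance (m y : ℤ) (σ : ℤ → Bool) : Decidable (IsRightmostZero m y σ) :=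
  inferInstanceAs (Decidable (_ ∧ _))

lemma sum_ite_isRightmostZero (m₂ m₁ : ℤ) (σ : ℤ → Bool) :
    (∑ y ∈ Icc m₂ m₁, if IsRightmostZero m₁ y σ then (1 : ℝ) else 0)
      = if ∃ x ∈ Icc m₂ m₁, σ x = false then 1 else 0 := by
  rw [sum_boole]
  split_ifs with h
  · obtain ⟨x, hx, hσx⟩ := h
    obtain ⟨y, hy, hmax⟩ := exists_max_image ((Icc m₂ m₁).filter (σ · = false)) id
      ⟨x, mem_filter.mpr ⟨hx, hσx⟩⟩
    obtain ⟨hyI, hσy⟩ := mem_filter.mp hy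
    have hsingle : {z ∈ Icc m₂ m₁ | IsRightmostZero m₁ z σ} = {y} := by
      ext z
      rw [mem_filter, mem_singleton]
      constructor
      · rintro ⟨hz, hσz, hright⟩
        have hzy : z ≤ y := hmax z (mem_filter.mpr ⟨hz, hσz⟩)
        by_contra hne
        have := hright y (mem_Ioc.mpr ⟨by omega, (mem_Icc.mp hyI).2⟩)
        simp [hσy] at this
      · rintro rfl
        refine ⟨hyI, hσy, fun w hw => ?_⟩
        rw [mem_Ioc] at hw
        have := mem_Icc.mp hyI
        by_contra hσw
        have := hmax w (mem_filter.mpr ⟨mem_Icc.mpr ⟨by omega, hw.2⟩, by simpa using hσw⟩)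
        simp only [id] at this
        omega
    rw [hsingle, card_singleton, Nat.cast_one]
  · rw [card_eq_zero.mpr (filter_eq_empty_iff.mpr fun y hy hr => h ⟨y, hy, hr.1⟩),
      Nat.cast_zero]

lemma indepOfSites_isRightmostZero (a m y : ℤ) :
    IndepOfSites (Icc a (y - 1)) (fun σ => if IsRightmostZero m y σ then (1 : ℝ) else 0) := by
  intro τ η
  have hfix : ∀ z, y ≤ z → patch (Icc a (y - 1)) τ η z = η z := fun z hz =>
    patch_apply_of_notMem (by rw [mem_Icc]; omega) τ η
  have hiff : IsRightmostZero m y (patch (Icc a (y - 1)) τ η) ↔ IsRightmostZero m y η := by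
    unfold IsRightmostZero
    rw [hfix y le_rfl]
    exact and_congr_right' (forall₂_congr fun z hz => by rw [hfix z (mem_Ioc.mp hz).1.le])
  simp only [hiff]

lemma condMean_condVar_le_of_eq_false (hq0 : 0 ≤ q) (hq1 : q ≤ 1) {a m₂ m₁ y : ℤ}
    (b : ℤ) (hgap : 0 < gapI q a m₁) (hy : y ∈ Icc m₂ m₁) (hζ : ζ y = false) :
    condMean q (Icc a (y - 1)) (condVar q (Icc a (m₂ - 1)) f) ζ
      ≤ (gapI q a m₁)⁻¹ * condMean q (Icc a (y - 1)) (dirDensity q b (Icc a m₁) f) ζ := by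
  rw [mem_Icc] at hy
  calc condMean q (Icc a (y - 1)) (condVar q (Icc a (m₂ - 1)) f) ζ
      ≤ condVar q (Icc a (y - 1)) f ζ :=
        condMean_condVar_le hq0 hq1 (Icc_subset_Icc_right (by omega))
    _ ≤ (gapI q a m₁)⁻¹ *
          condMean q (Icc a (y - 1)) (dirDensity q (y - 1) (Icc a (y - 1)) f) ζ :=
        (le_inv_mul_iff₀ hgap).mpr (gapI_mul_condVar_le hq0 hq1 (by omega) f ζ)
    _ ≤ (gapI q a m₁)⁻¹ * condMean q (Icc a (y - 1)) (dirDensity q b (Icc a m₁) f) ζ := by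
        refine mul_le_mul_of_nonneg_left (condMean_mono hq0 hq1 fun τ => ?_)
          (inv_nonneg.mpr hgap.le)
        refine dirDensity_le_of_eq_false hq0 hq1 b (by omega) ?_
        rwa [patch_apply_of_notMem (by rw [mem_Icc]; omega) τ ζ]

lemma condMean_ite_isRightmostZero_mul_le (hq0 : 0 ≤ q) (hq1 : q ≤ 1) {a m₂ m₁ b y : ℤ}
    (hgap : 0 < gapI q a m₁) (hy : y ∈ Icc m₂ m₁) (hb : m₁ ≤ b) (η : ℤ → Bool) :
    condMean q (Icc a b) (fun σ =>
        (if IsRightmostZero m₁ y σ then (1 : ℝ) else 0) * condVar q (Icc a (m₂ - 1)) f σ) η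
      ≤ (gapI q a m₁)⁻¹ * condMean q (Icc a b) (fun σ =>
        (if IsRightmostZero m₁ y σ then (1 : ℝ) else 0) * dirDensity q b (Icc a m₁) f σ) η := by
  have hB : Icc a (y - 1) ⊆ Icc a b := Icc_subset_Icc_right (by rw [mem_Icc] at hy; omega)
  rw [condMean_eq_condMean_sdiff hB, condMean_eq_condMean_sdiff hB, ← condMean_const_mul]
  refine condMean_mono hq0 hq1 fun τ => ?_
  rw [condMean_mul_of_indepOfSites (indepOfSites_isRightmostZero a m₁ y),
    condMean_mul_of_indepOfSites (indepOfSites_isRightmostZero a m₁ y)]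
  split_ifs with hζ
  · simpa only [one_mul] using condMean_condVar_le_of_eq_false hq0 hq1 b hgap hy hζ.1
  · simp

end Bisection

theorem east_bisection_constrained_term_general (q : ℝ) (hq : 0 < q) (hq1 : q < 1)
    (a m₂ m₁ b : ℤ) (h3 : m₁ ≤ b)
    (f : (ℤ → Bool) → ℝ) (hgap : 0 < gapI q a m₁) :
    meanI q a b (fun σ =>
        (if ∃ x ∈ Finset.Icc m₂ m₁, σ x = false then (1 : ℝ) else 0)
          * condVar q (Finset.Icc a (m₂ - 1)) f σ)
      ≤ (gapI q a m₁)⁻¹ *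
        meanI q a b (fun σ => ∑ x ∈ Finset.Icc a m₁, cE b x σ * condVar q {x} f σ) := by
  set c₁ : (ℤ → Bool) → ℝ := fun σ =>
    if ∃ x ∈ Icc m₂ m₁, σ x = false then 1 else 0
  set ind : ℤ → (ℤ → Bool) → ℝ := fun y σ => if IsRightmostZero m₁ y σ then 1 else 0
  set V := condVar q (Icc a (m₂ - 1)) f
  set D := dirDensity q b (Icc a m₁) f
  set G := (gapI q a m₁)⁻¹
  calc meanI q a b (fun σ => c₁ σ * V σ)
      = ∑ y ∈ Icc m₂ m₁, condMean q (Icc a b) (fun σ => ind y σ * V σ) allOnes := by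
        simp only [c₁, ind, meanI, ← condMean_sum, ← sum_mul, sum_ite_isRightmostZero]
    _ ≤ ∑ y ∈ Icc m₂ m₁, G * condMean q (Icc a b) (fun σ => ind y σ * D σ) allOnes :=
        sum_le_sum fun y hy => condMean_ite_isRightmostZero_mul_le hq.le hq1.le hgap hy h3 allOnes
    _ = G * meanI q a b (fun σ => c₁ σ * D σ) := by
        simp only [c₁, ind, meanI, ← mul_sum, ← condMean_sum, ← sum_mul,
          sum_ite_isRightmostZero]
    _ ≤ G * meanI q a b D := by
        refine mul_le_mul_of_nonneg_left (condMean_mono hq.le hq1.le fun _ => ?_)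
          (inv_nonneg.mpr hgap.le)
        simp only [c₁]
        split_ifs
        · rw [one_mul]
        · rw [zero_mul]
          exact dirDensity_nonneg hq.le hq1.le b _ f _

/-- **The constrained block term in the bisection method.**  Let `Λ = [a,b]`,
`Λ₁ = [a,m₁]`, `Λ₂ = [m₂,b]` with overlap `I = Λ₁ ∩ Λ₂ = [m₂,m₁]`, and blocks
`B₁ = Λ \ Λ₂ = [a,m₂-1]`, `B₂ = Λ₂`.  With `c₁(σ)` the indicator that `σ` has at least
one zero in `I`, one has
`π_Λ(c₁ · Var_{B₁}(f)) ≤ gap(L_{Λ₁})⁻¹ · π_Λ(Σ_{x ∈ Λ₁} c_x^Λ Var_x(f))`. -/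
theorem east_bisection_constrained_term (q : ℝ) (hq : 0 < q) (hq1 : q < 1)
    (a m₂ m₁ b : ℤ) (h1 : a ≤ m₂) (h2 : m₂ ≤ m₁) (h3 : m₁ ≤ b)
    (f : (ℤ → Bool) → ℝ) (hgap : 0 < gapI q a m₁) :
    meanI q a b (fun σ =>
        (if ∃ x ∈ Finset.Icc m₂ m₁, σ x = false then (1 : ℝ) else 0)
          * condVar q (Finset.Icc a (m₂ - 1)) f σ)
      ≤ (gapI q a m₁)⁻¹ *
        meanI q a b (fun σ => ∑ x ∈ Finset.Icc a m₁, cE b x σ * condVar q {x} f σ) :=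
  east_bisection_constrained_term_general q hq hq1 a m₂ m₁ b h3 f hgap
end
end

section
/- If γ_k ≤ (1 + 1/s_k)·(1 − √ε_k)^{-1}·γ_{k−1} with s_k = ⌊2^{kδ}⌋ and ε_k ≤ (1−q)^{δ_k/8}, δ_k = ⌊2^{k(1−3δ)}⌋, then the infinite product Π_{j≥k₀} (1+1/s_j)/(1−√ε_j) converges, and hence sup_k γ_k < ∞; moreover, as q ↓ 0 the product is bounded above by q^{−a′}·(1/q)^{log₂(1/q)/(2−6δ)} for some constant a′ independent of q. -/
noncomputable section

/-- `s_k = ⌊2^{kδ}⌋`. -/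
def sSeq (δ : ℝ) (k : ℕ) : ℝ := (⌊(2 : ℝ) ^ ((k : ℝ) * δ)⌋ : ℤ)

/-- `δ_k = ⌊2^{k(1-3δ)}⌋`. -/
def dSeq (δ : ℝ) (k : ℕ) : ℝ := (⌊(2 : ℝ) ^ ((k : ℝ) * (1 - 3 * δ))⌋ : ℤ)

open Real Finset

/-! The factor `1 + 1/s_j` exceeds `1` by at most `2 · 2^{-jδ}`, and, since `1 - q ≤ e^{-q}`,
`(1 - √ε_j)⁻¹` exceeds `1` by at most `32 q⁻¹ 2^{-jβ}` with `β = 1 - 3δ`. Both excesses are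
summable, so the product converges and `γ_k ≤ γ_0 ∏_{j ≤ k} (⋯)` stays bounded.
For the dependence on `q`, split at `J = ⌈log₂(1/q) / β⌉`: beyond `J` the excesses are
geometric with ratio `2^{-β}` uniformly in `q`, while the first `J` factors are at most
`2^{6 + log₂(1/q) - jβ}`, a product bounded by `2^{(log₂(1/q) + 6 + β/2)² / 2β}`. -/

theorem half_le_floor {x : ℝ} (hx : 1 ≤ x) : x / 2 ≤ ⌊x⌋ := by
  have h1 : (1 : ℝ) ≤ ⌊x⌋ := by exact_mod_cast Int.le_floor.mpr (by exact_mod_cast hx)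
  have h2 := Int.sub_one_lt_floor x
  rcases le_or_gt x 2 with h | h <;> linarith

theorem two_rpow_neg_mul_eq_pow (c : ℝ) (k : ℕ) : (2 : ℝ) ^ (-(k * c)) = (2 ^ (-c)) ^ k := by
  rw [← rpow_natCast, ← rpow_mul zero_le_two]
  ring_nf

theorem hasSum_two_rpow_neg_mul {c : ℝ} (hc : 0 < c) :
    HasSum (fun k : ℕ => (2 : ℝ) ^ (-(k * c))) (1 - 2 ^ (-c))⁻¹ := by
  simp_rw [two_rpow_neg_mul_eq_pow]
  exact hasSum_geometric_of_lt_one (by positivity)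
    (rpow_lt_one_of_one_lt_of_neg one_lt_two (neg_neg_of_pos hc))

theorem two_rpow_div_two_le_floor {c : ℝ} (hc : 0 ≤ c) (k : ℕ) :
    (2 : ℝ) ^ ((k : ℝ) * c) / 2 ≤ ⌊(2 : ℝ) ^ ((k : ℝ) * c)⌋ :=
  half_le_floor (one_le_rpow one_le_two (by positivity))

theorem one_add_one_div_sSeq_le {δ : ℝ} (hδ : 0 ≤ δ) (k : ℕ) :
    1 ≤ 1 + 1 / sSeq δ k ∧ 1 + 1 / sSeq δ k ≤ 1 + 2 * 2 ^ (-(k * δ)) := by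
  have hs : (2 : ℝ) ^ ((k : ℝ) * δ) / 2 ≤ sSeq δ k := two_rpow_div_two_le_floor hδ k
  have hpos : 0 < (2 : ℝ) ^ ((k : ℝ) * δ) / 2 := by positivity
  refine ⟨le_add_of_nonneg_right (one_div_nonneg.2 (hpos.le.trans hs)), ?_⟩
  calc 1 + 1 / sSeq δ k ≤ 1 + 1 / ((2 : ℝ) ^ ((k : ℝ) * δ) / 2) := by gcongr
    _ = 1 + 2 * 2 ^ (-(k * δ)) := by rw [rpow_neg zero_le_two]; field_simp

theorem two_rpow_div_two_le_dSeq {δ : ℝ} (hδ : 3 * δ ≤ 1) (k : ℕ) :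
    (2 : ℝ) ^ ((k : ℝ) * (1 - 3 * δ)) / 2 ≤ dSeq δ k :=
  two_rpow_div_two_le_floor (by linarith) k

section OneAddBound

variable {ι : Type*} {f u : ι → ℝ}

theorem summable_log_of_le_one_add (hf : ∀ i, 1 ≤ f i) (hfu : ∀ i, f i ≤ 1 + u i)
    (hu : Summable u) : Summable fun i => log (f i) :=
  hu.of_nonneg_of_le (fun i => log_nonneg (hf i))
    (fun i => (log_le_sub_one_of_pos (zero_lt_one.trans_le (hf i))).trans (by linarith [hfu i]))

theorem multipliable_of_le_one_add (hf : ∀ i, 1 ≤ f i) (hfu : ∀ i, f i ≤ 1 + u i)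
    (hu : Summable u) : Multipliable f :=
  multipliable_of_summable_log (fun i => zero_lt_one.trans_le (hf i))
    (summable_log_of_le_one_add hf hfu hu)

theorem tprod_le_exp_tsum_of_le_one_add (hf : ∀ i, 1 ≤ f i) (hfu : ∀ i, f i ≤ 1 + u i)
    (hu : Summable u) : ∏' i, f i ≤ exp (∑' i, u i) := by
  have hlog := summable_log_of_le_one_add hf hfu hu
  rw [← rexp_tsum_eq_tprod (fun i => zero_lt_one.trans_le (hf i)) hlog, exp_le_exp]
  exact hlog.tsum_le_tsum
    (fun i => (log_le_sub_one_of_pos (zero_lt_one.trans_le (hf i))).trans (by linarith [hfu i])) hu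

end OneAddBound

theorem prod_range_le_tprod_of_one_le {f : ℕ → ℝ} (hf : ∀ i, 1 ≤ f i) (hmul : Multipliable f)
    (n : ℕ) : ∏ i ∈ range n, f i ≤ ∏' i, f i := by
  have hmono : Monotone fun n => ∏ i ∈ range n, f i := monotone_nat_of_le_succ fun n => by
    rw [prod_range_succ]
    exact le_mul_of_one_le_right (prod_nonneg fun i _ => zero_le_one.trans (hf i)) (hf n)
  exact hmono.ge_of_tendsto hmul.hasProd.tendsto_prod_nat n

theorem le_prod_range_mul_of_le_mul {T γ : ℕ → ℝ} (hT : ∀ k, 1 ≤ T k) (hγ0 : 0 ≤ γ 0)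
    (hγ : ∀ k, γ (k + 1) ≤ T (k + 1) * γ k) (n : ℕ) :
    γ n ≤ (∏ i ∈ range (n + 1), T i) * γ 0 := by
  induction n with
  | zero => simpa using le_mul_of_one_le_left hγ0 (hT 0)
  | succ n ih =>
    calc γ (n + 1) ≤ T (n + 1) * ((∏ i ∈ range (n + 1), T i) * γ 0) :=
          (hγ n).trans (mul_le_mul_of_nonneg_left ih (zero_le_one.trans (hT _)))
      _ = (∏ i ∈ range (n + 2), T i) * γ 0 := by rw [prod_range_succ _ (n + 1)]; ring

theorem bddAbove_range_of_le_mul {T γ : ℕ → ℝ} (hT : ∀ k, 1 ≤ T k) (hmul : Multipliable T)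
    (hγ0 : 0 ≤ γ 0) (hγ : ∀ k, γ (k + 1) ≤ T (k + 1) * γ k) : BddAbove (Set.range γ) := by
  refine ⟨(∏' i, T i) * γ 0, ?_⟩
  rintro _ ⟨n, rfl⟩
  exact (le_prod_range_mul_of_le_mul hT hγ0 hγ n).trans
    (mul_le_mul_of_nonneg_right (prod_range_le_tprod_of_one_le hT hmul _) hγ0)

theorem inv_one_sub_sqrt_le {q m ε : ℝ} (hq0 : 0 < q) (hq1 : q < 1) (hm : 0 < m)
    (hε : ε ≤ (1 - q) ^ (m / 8)) : 1 ≤ (1 - √ε)⁻¹ ∧ (1 - √ε)⁻¹ ≤ 1 + 16 / (q * m) := by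
  set t := q * m / 16 with ht_def
  have ht : 0 < t := by positivity
  have hsqrt : √ε ≤ (1 + t)⁻¹ := calc
    √ε ≤ √((1 - q) ^ (m / 8)) := sqrt_le_sqrt hε
    _ = (1 - q) ^ (m / 16) := by rw [sqrt_eq_rpow, ← rpow_mul (by linarith)]; ring_nf
    _ ≤ exp (-q) ^ (m / 16) :=
        rpow_le_rpow (by linarith) (by linarith [add_one_le_exp (-q)]) (by positivity)
    _ = exp (-t) := by rw [← exp_mul, ht_def]; ring_nf
    _ ≤ (1 + t)⁻¹ := by
        rw [exp_neg]; exact inv_anti₀ (by positivity) (by linarith [add_one_le_exp t])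
  have hgap : t / (1 + t) ≤ 1 - √ε := by
    have : (1 + t)⁻¹ = 1 - t / (1 + t) := by field_simp; ring
    linarith
  have hgap_pos : 0 < t / (1 + t) := by positivity
  refine ⟨(one_le_inv₀ (hgap_pos.trans_le hgap)).2 (by linarith [sqrt_nonneg ε]), ?_⟩
  calc (1 - √ε)⁻¹ ≤ (t / (1 + t))⁻¹ := inv_anti₀ hgap_pos hgap
    _ = 1 + 16 / (q * m) := by field_simp; ring

theorem inv_one_sub_sqrt_le_of_le_dSeq {δ q ε : ℝ} (hδ : 3 * δ ≤ 1) (hq0 : 0 < q) (hq1 : q < 1)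
    {k : ℕ} (hε : ε ≤ (1 - q) ^ (dSeq δ k / 8)) :
    1 ≤ (1 - √ε)⁻¹ ∧ (1 - √ε)⁻¹ ≤ 1 + 32 / q * 2 ^ (-(k * (1 - 3 * δ))) := by
  have hd := two_rpow_div_two_le_dSeq hδ k
  have hpos : 0 < (2 : ℝ) ^ ((k : ℝ) * (1 - 3 * δ)) / 2 := by positivity
  obtain ⟨h1, h2⟩ := inv_one_sub_sqrt_le hq0 hq1 (hpos.trans_le hd) hε
  refine ⟨h1, h2.trans ?_⟩
  calc 1 + 16 / (q * dSeq δ k) ≤ 1 + 16 / (q * ((2 : ℝ) ^ ((k : ℝ) * (1 - 3 * δ)) / 2)) := by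
        gcongr
    _ = 1 + 32 / q * 2 ^ (-(k * (1 - 3 * δ))) := by rw [rpow_neg zero_le_two]; field_simp; ring

theorem prod_range_one_add_mul_two_rpow_le {C a β ℓ : ℝ} (hC : 0 ≤ C) (hCa : 1 + C ≤ 2 ^ a)
    (hβ : 0 < β) {J : ℕ} (hJ : ∀ j < J, (j : ℝ) * β ≤ ℓ) :
    ∏ j ∈ range J, (1 + C * 2 ^ (ℓ - j * β)) ≤ 2 ^ ((a + β / 2 + ℓ) ^ 2 / (2 * β)) := by
  have hfactor : ∀ j ∈ range J, 1 + C * 2 ^ (ℓ - j * β) ≤ (2 : ℝ) ^ (a + ℓ - j * β) := by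
    intro j hj
    have hx : 1 ≤ (2 : ℝ) ^ (ℓ - j * β) :=
      one_le_rpow one_le_two (by linarith [hJ j (mem_range.1 hj)])
    calc 1 + C * 2 ^ (ℓ - j * β) ≤ (1 + C) * 2 ^ (ℓ - j * β) := by nlinarith
      _ ≤ 2 ^ a * 2 ^ (ℓ - j * β) := by gcongr
      _ = 2 ^ (a + ℓ - j * β) := by rw [← rpow_add two_pos]; ring_nf
  have hgauss : ∀ n : ℕ, (∑ j ∈ range n, (j : ℝ)) * 2 = n * (n - 1) := fun n => by
    induction n with
    | zero => simp
    | succ n ih => rw [sum_range_succ, add_mul, ih]; push_cast; ring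
  have hsum : (∑ j ∈ range J, (a + ℓ - j * β)) * 2 = J * (a + ℓ) * 2 - β * (J * (J - 1)) := by
    simp only [sum_sub_distrib, sum_const, card_range, nsmul_eq_mul, ← sum_mul]
    rw [← hgauss]; ring
  calc ∏ j ∈ range J, (1 + C * 2 ^ (ℓ - j * β))
      ≤ ∏ j ∈ range J, (2 : ℝ) ^ (a + ℓ - j * β) :=
        prod_le_prod (fun j _ => by positivity) hfactor
    _ = 2 ^ (∑ j ∈ range J, (a + ℓ - j * β)) := (rpow_sum_of_pos two_pos _ _).symm
    _ ≤ 2 ^ ((a + β / 2 + ℓ) ^ 2 / (2 * β)) := by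
      refine rpow_le_rpow_of_exponent_le one_le_two ?_
      rw [le_div_iff₀ (by positivity)]
      -- the exponent is a concave quadratic in `J`, maximal at `J = (a + β / 2 + ℓ) / β`
      nlinarith [sq_nonneg (β * J - (a + β / 2 + ℓ))]

section Iteration

variable {δ q : ℝ} {ε : ℕ → ℝ}

theorem multipliable_one_add_one_div_sSeq (hδ : 0 < δ) :
    Multipliable fun k => 1 + 1 / sSeq δ k :=
  multipliable_of_le_one_add (fun k => (one_add_one_div_sSeq_le hδ.le k).1)
    (fun k => (one_add_one_div_sSeq_le hδ.le k).2)
    ((hasSum_two_rpow_neg_mul hδ).mul_left 2).summable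

theorem tprod_one_add_one_div_sSeq_le (hδ : 0 < δ) :
    ∏' k, (1 + 1 / sSeq δ k) ≤ exp (2 * (1 - 2 ^ (-δ))⁻¹) := by
  have hsum := (hasSum_two_rpow_neg_mul hδ).mul_left 2
  rw [← hsum.tsum_eq]
  exact tprod_le_exp_tsum_of_le_one_add (fun k => (one_add_one_div_sSeq_le hδ.le k).1)
    (fun k => (one_add_one_div_sSeq_le hδ.le k).2) hsum.summable

theorem multipliable_inv_one_sub_sqrt (hδ : 3 * δ < 1) (hq0 : 0 < q) (hq1 : q < 1)
    (hε : ∀ k, ε k ≤ (1 - q) ^ (dSeq δ k / 8)) : Multipliable fun k => (1 - √(ε k))⁻¹ :=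
  multipliable_of_le_one_add (fun k => (inv_one_sub_sqrt_le_of_le_dSeq hδ.le hq0 hq1 (hε k)).1)
    (fun k => (inv_one_sub_sqrt_le_of_le_dSeq hδ.le hq0 hq1 (hε k)).2)
    ((hasSum_two_rpow_neg_mul (c := 1 - 3 * δ) (by linarith)).mul_left (32 / q)).summable

theorem tprod_inv_one_sub_sqrt_le (hδ : 3 * δ < 1) (hq0 : 0 < q) (hq1 : q < 1)
    (hε : ∀ k, ε k ≤ (1 - q) ^ (dSeq δ k / 8)) :
    ∏' k, (1 - √(ε k))⁻¹ ≤ 2 ^ ((6 + (1 - 3 * δ) / 2 + logb 2 (1 / q)) ^ 2 / (2 * (1 - 3 * δ))) *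
      exp (32 * (1 - 2 ^ (-(1 - 3 * δ)))⁻¹) := by
  have hg := fun k => inv_one_sub_sqrt_le_of_le_dSeq hδ.le hq0 hq1 (hε k)
  have hβ : 0 < 1 - 3 * δ := by linarith
  have hqℓ : (2 : ℝ) ^ logb 2 (1 / q) = 1 / q := rpow_logb two_pos (by norm_num) (by positivity)
  set β := 1 - 3 * δ
  set ℓ := logb 2 (1 / q)
  have hgℓ : ∀ k : ℕ, (1 - √(ε k))⁻¹ ≤ 1 + 32 * 2 ^ (ℓ - k * β) := fun k => by
    refine (hg k).2.trans_eq ?_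
    rw [sub_eq_add_neg, rpow_add two_pos, hqℓ]
    ring
  -- split the product at the first index `J` with `2 ^ (J β) ≥ 1 / q`
  set J := ⌈ℓ / β⌉₊
  have hJ : ℓ ≤ J * β := (div_le_iff₀ hβ).1 (Nat.le_ceil _)
  have htail_le : ∀ i : ℕ, (1 - √(ε (i + J)))⁻¹ ≤ 1 + 32 * 2 ^ (-(i * β)) := fun i => by
    refine (hgℓ (i + J)).trans ?_
    gcongr
    · exact one_le_two
    · push_cast; linarith
  have htail_sum := (hasSum_two_rpow_neg_mul hβ).mul_left 32
  have htail_mul : Multipliable fun i => (1 - √(ε (i + J)))⁻¹ :=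
    multipliable_of_le_one_add (fun i => (hg _).1) htail_le htail_sum.summable
  have htail : ∏' i, (1 - √(ε (i + J)))⁻¹ ≤ exp (32 * (1 - 2 ^ (-β))⁻¹) := by
    rw [← htail_sum.tsum_eq]
    exact tprod_le_exp_tsum_of_le_one_add (fun i => (hg _).1) htail_le htail_sum.summable
  have hhead : ∏ j ∈ range J, (1 - √(ε j))⁻¹ ≤ 2 ^ ((6 + β / 2 + ℓ) ^ 2 / (2 * β)) :=
    (prod_le_prod (fun j _ => zero_le_one.trans (hg j).1) fun j _ => hgℓ j).trans
      (prod_range_one_add_mul_two_rpow_le (C := 32) (a := 6) (by norm_num)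
        (by rw [show (6 : ℝ) = (6 : ℕ) by norm_num, rpow_natCast]; norm_num) hβ
        fun j hj => (le_div_iff₀ hβ).1 (Nat.lt_ceil.1 hj).le)
  rw [← htail_mul.prod_mul_tprod_nat_mul' (f := fun k => (1 - √(ε k))⁻¹)]
  exact mul_le_mul hhead htail (tprod_nonneg fun i => zero_le_one.trans (hg _).1) (by positivity)

end Iteration

theorem mul_two_rpow_sq_le {K b c Q : ℝ} (hK : 1 ≤ K) (hb : 0 < b) (hQ : 2 ≤ Q) :
    K * 2 ^ ((c + logb 2 Q) ^ 2 / (2 * b)) ≤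
      Q ^ (logb 2 K + c / b + c ^ 2 / (2 * b)) * Q ^ (logb 2 Q / (2 * b)) := by
  set ℓ := logb 2 Q
  have hℓ : 1 ≤ ℓ := (le_logb_iff_rpow_le one_lt_two (by linarith)).2 (by simpa using hQ)
  have hκ : 0 ≤ logb 2 K := logb_nonneg one_lt_two hK
  have hQℓ : Q = 2 ^ ℓ := (rpow_logb two_pos (by norm_num) (by linarith)).symm
  have hKκ : K = 2 ^ logb 2 K := (rpow_logb two_pos (by norm_num) (by linarith)).symm
  have hsq : (c + ℓ) ^ 2 / (2 * b) = c ^ 2 / (2 * b) + ℓ * (c / b) + ℓ * (ℓ / (2 * b)) := by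
    field_simp; ring
  have hc2 : 0 ≤ c ^ 2 / (2 * b) := by positivity
  calc K * 2 ^ ((c + ℓ) ^ 2 / (2 * b)) = 2 ^ (logb 2 K + (c + ℓ) ^ 2 / (2 * b)) := by
        rw [rpow_add two_pos, ← hKκ]
    _ ≤ 2 ^ (ℓ * (logb 2 K + c / b + c ^ 2 / (2 * b)) + ℓ * (ℓ / (2 * b))) := by
        refine rpow_le_rpow_of_exponent_le one_le_two ?_
        rw [hsq]
        nlinarith
    _ = Q ^ (logb 2 K + c / b + c ^ 2 / (2 * b)) * Q ^ (ℓ / (2 * b)) := by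
        rw [rpow_add two_pos, rpow_mul zero_le_two, rpow_mul zero_le_two, ← hQℓ]

/-- **Convergence of the iteration in the bisection-constrained method.**
If `γ_k ≤ (1 + 1/s_k)(1-√ε_k)⁻¹ γ_{k-1}` with `s_k = ⌊2^{kδ}⌋` and
`ε_k ≤ (1-q)^{δ_k/8}`, `δ_k = ⌊2^{k(1-3δ)}⌋`, then the infinite product
`Π_j (1+1/s_j)/(1-√ε_j)` converges and `sup_k γ_k < ∞`; moreover, as `q ↓ 0` the product
is bounded above by `q^{-a'} (1/q)^{log₂(1/q)/(2-6δ)}` for some constant `a'`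
independent of `q`. -/
theorem bisection_iteration (δ : ℝ) (hδ : 0 < δ) (hδ' : δ < 1 / 6) :
    (∀ q : ℝ, 0 < q → q < 1 → ∀ ε γ : ℕ → ℝ,
      (∀ k, 0 ≤ ε k) → (∀ k, ε k ≤ (1 - q) ^ (dSeq δ k / 8)) →
      (∀ k, 0 ≤ γ k) →
      (∀ k : ℕ, 1 ≤ k → γ k ≤ (1 + 1 / sSeq δ k) * (1 - Real.sqrt (ε k))⁻¹ * γ (k - 1)) →
      Multipliable (fun j : ℕ => (1 + 1 / sSeq δ j) * (1 - Real.sqrt (ε j))⁻¹) ∧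
      BddAbove (Set.range γ)) ∧
    (∃ a' : ℝ, ∃ q₀ : ℝ, 0 < q₀ ∧ ∀ q : ℝ, 0 < q → q < q₀ → ∀ ε : ℕ → ℝ,
      (∀ k, 0 ≤ ε k) → (∀ k, ε k ≤ (1 - q) ^ (dSeq δ k / 8)) →
      (∏' j : ℕ, (1 + 1 / sSeq δ j) * (1 - Real.sqrt (ε j))⁻¹)
        ≤ (1 / q) ^ a' * (1 / q) ^ (Real.logb 2 (1 / q) / (2 - 6 * δ))) := by
  have h3δ : 3 * δ < 1 := by linarith
  set K := exp (2 * (1 - 2 ^ (-δ))⁻¹) * exp (32 * (1 - 2 ^ (-(1 - 3 * δ)))⁻¹)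
  set c := 6 + (1 - 3 * δ) / 2
  refine ⟨fun q hq0 hq1 ε γ _ hε hγ0 hγ => ?_,
    logb 2 K + c / (1 - 3 * δ) + c ^ 2 / (2 * (1 - 3 * δ)), 1 / 2, one_half_pos,
    fun q hq0 hq ε _ hε => ?_⟩
  · have hT : ∀ k, 1 ≤ (1 + 1 / sSeq δ k) * (1 - √(ε k))⁻¹ := fun k =>
      one_le_mul_of_one_le_of_one_le (one_add_one_div_sSeq_le hδ.le k).1
        (inv_one_sub_sqrt_le_of_le_dSeq h3δ.le hq0 hq1 (hε k)).1
    have hmul := (multipliable_one_add_one_div_sSeq hδ).mul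
      (multipliable_inv_one_sub_sqrt h3δ hq0 hq1 hε)
    exact ⟨hmul, bddAbove_range_of_le_mul hT hmul (hγ0 0) fun k => hγ (k + 1) k.succ_pos⟩
  · have hq1 : q < 1 := by linarith
    have hg := fun j => inv_one_sub_sqrt_le_of_le_dSeq h3δ.le hq0 hq1 (hε j)
    have hinv : ∀ {b : ℝ}, 0 < b → 0 ≤ (1 - (2 : ℝ) ^ (-b))⁻¹ := fun hb =>
      (hasSum_two_rpow_neg_mul hb).nonneg fun _ => by positivity
    have hK : 1 ≤ K := one_le_mul_of_one_le_of_one_le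
      (one_le_exp (mul_nonneg zero_le_two (hinv hδ)))
      (one_le_exp (mul_nonneg (by norm_num) (hinv (by linarith))))
    calc ∏' j, (1 + 1 / sSeq δ j) * (1 - √(ε j))⁻¹
        = (∏' j, (1 + 1 / sSeq δ j)) * ∏' j, (1 - √(ε j))⁻¹ :=
          (multipliable_one_add_one_div_sSeq hδ).tprod_mul
            (multipliable_inv_one_sub_sqrt h3δ hq0 hq1 hε)
      _ ≤ exp (2 * (1 - 2 ^ (-δ))⁻¹) * (2 ^ ((c + logb 2 (1 / q)) ^ 2 / (2 * (1 - 3 * δ))) *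
            exp (32 * (1 - 2 ^ (-(1 - 3 * δ)))⁻¹)) :=
          mul_le_mul (tprod_one_add_one_div_sSeq_le hδ) (tprod_inv_one_sub_sqrt_le h3δ hq0 hq1 hε)
            (tprod_nonneg fun j => zero_le_one.trans (hg j).1) (exp_pos _).le
      _ = K * 2 ^ ((c + logb 2 (1 / q)) ^ 2 / (2 * (1 - 3 * δ))) := by ring
      _ ≤ _ := by
        rw [show 2 - 6 * δ = 2 * (1 - 3 * δ) by ring]
        exact mul_two_rpow_sq_le hK (by linarith) (by rw [le_div_iff₀ hq0]; linarith)
end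
end
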